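/- arXiv:2209.07624 — 10 statements merged into one kernel-verified Lean document; each statement's English description precedes it below -/
import Mathlib

section
/- Let p be a prime, d ≥ 2 with p ∤ d, and c ∈ ℤ_p. Define f(x) = x^d + c. Let r ∈ ℤ_p be such that the reduction of r modulo p is a strictly preperiodic point of the reduction of f over 𝔽_p with tail length m > 0 and eventual period n, and suppose the multiplier λ = (d/dx) f^n(x) evaluated at x = f^m(r) is a unit in ℤ_p. Then for every t ≥ 1, the point r modulo p^t is strictly preperiodic for f modulo p^t with tail length exactly m (and some period n_t ≥ 1). -/
/-- `a` is a preperiodic point of `g` with tail length exactly `m` and exact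
eventual period `n`. -/
def PeriodType {α : Type*} (g : α → α) (a : α) (m n : ℕ) : Prop :=
  (∃ l, 0 < l ∧ g^[l] (g^[m] a) = g^[m] a) ∧
  (∀ m' < m, ¬ ∃ l, 0 < l ∧ g^[l] (g^[m'] a) = g^[m'] a) ∧
  0 < n ∧ g^[n] (g^[m] a) = g^[m] a ∧
  (∀ l, 0 < l → g^[l] (g^[m] a) = g^[m] a → n ≤ l)

private lemma iter_semiconj {R S : Type*} [CommRing R] [CommRing S] (φ : R →+* S)
    (d : ℕ) (c : R) (j : ℕ) (x : R) :
    φ ((fun x : R => x ^ d + c)^[j] x) = (fun y : S => y ^ d + φ c)^[j] (φ x) := by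
  induction j generalizing x with
  | zero => simp
  | succ j ih =>
    rw [Function.iterate_succ_apply, Function.iterate_succ_apply, ih]
    simp

private lemma iter_diff {R S : Type*} [CommRing R] [CommRing S] (φ : R →+* S)
    (d : ℕ) (c : R) (j : ℕ) :
    ∀ x y : R, φ x = φ y →
      ∃ u : R, (fun x : R => x ^ d + c)^[j] x - (fun x : R => x ^ d + c)^[j] y
          = (x - y) * u ∧
        φ u = ∏ i ∈ Finset.range j,
          (d : S) * ((fun z : S => z ^ d + φ c)^[i] (φ x)) ^ (d - 1) := by
  induction j with
  | zero => exact fun x y h => ⟨1, by simp, by simp⟩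
  | succ j ih =>
    intro x y h
    obtain ⟨u, hu, hφu⟩ := ih x y h
    set F := fun x : R => x ^ d + c with hF
    have hXY : φ (F^[j] x) = φ (F^[j] y) := by
      rw [iter_semiconj, iter_semiconj, h]
    refine ⟨u * (∑ i ∈ Finset.range d, (F^[j] x) ^ i * (F^[j] y) ^ (d - 1 - i)), ?_, ?_⟩
    · rw [Function.iterate_succ_apply', Function.iterate_succ_apply']
      have h2 : F (F^[j] x) - F (F^[j] y) = (F^[j] x) ^ d - (F^[j] y) ^ d := by
        simp only [hF]; ring
      rw [h2, ← geom_sum₂_mul, hu]; ring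
    · rw [map_mul, hφu, Finset.prod_range_succ, map_sum]
      congr 1
      have h3 : ∀ i ∈ Finset.range d,
          φ ((F^[j] x) ^ i * (F^[j] y) ^ (d - 1 - i))
            = ((fun z : S => z ^ d + φ c)^[j] (φ x)) ^ (d - 1) := by
        intro i hi
        rw [Finset.mem_range] at hi
        rw [map_mul, map_pow, map_pow, ← hXY, ← pow_add, iter_semiconj]
        congr 1
        omega
      rw [Finset.sum_congr rfl h3, Finset.sum_const, Finset.card_range, nsmul_eq_mul]

private lemma cast_comp_toZModPow {p : ℕ} [Fact p.Prime] (t : ℕ) (ht : t ≠ 0) (x : ℤ_[p]) :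
    ZMod.castHom (dvd_pow_self p ht) (ZMod p) (PadicInt.toZModPow t x) = PadicInt.toZMod x := by
  have hspec := PadicInt.toZMod_spec x
  rw [PadicInt.maximalIdeal_eq_span_p, Ideal.mem_span_singleton] at hspec
  obtain ⟨y, hy⟩ := hspec
  have hx : x = (ZMod.cast (PadicInt.toZMod x) : ℤ_[p]) + p * y := by
    rw [← hy]; ring
  have hcast : (ZMod.cast (PadicInt.toZMod x) : ℤ_[p]) =
      (((PadicInt.toZMod x).val : ℕ) : ℤ_[p]) := by
    rw [ZMod.natCast_val]
  calc ZMod.castHom (dvd_pow_self p ht) (ZMod p) (PadicInt.toZModPow t x)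
      = ZMod.castHom (dvd_pow_self p ht) (ZMod p)
          (PadicInt.toZModPow t ((((PadicInt.toZMod x).val : ℕ) : ℤ_[p]) + (p : ℤ_[p]) * y)) := by
        rw [← hcast, ← hx]
    _ = PadicInt.toZMod x := by
        simp [map_add, map_mul, map_natCast, ZMod.natCast_self, ZMod.natCast_zmod_val,
          -ZMod.natCast_val]
        rw [← PadicInt.val_toZMod_eq_zmodRepr, ZMod.natCast_zmod_val]

private lemma isUnit_of_isUnit_cast {p : ℕ} [Fact p.Prime] {t : ℕ} (ht : t ≠ 0)
    (u : ZMod (p ^ t))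
    (h : IsUnit (ZMod.castHom (dvd_pow_self p ht) (ZMod p) u)) : IsUnit u := by
  haveI : NeZero (p ^ t) := ⟨pow_ne_zero t (Fact.out (p := p.Prime)).ne_zero⟩
  set π := ZMod.castHom (dvd_pow_self p ht) (ZMod p) with hπ
  obtain ⟨w, hw⟩ := h
  -- pick a preimage of the inverse
  set v : ZMod (p ^ t) := (((w⁻¹ : Units (ZMod p)) : ZMod p).val : ZMod (p ^ t)) with hv
  have hπv : π v = ((w⁻¹ : Units (ZMod p)) : ZMod p) := by
    rw [hv, map_natCast, ZMod.natCast_zmod_val]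
  have h1 : π (u * v - 1) = 0 := by
    rw [map_sub, map_mul, hπv, ← hw, map_one, Units.mul_inv, sub_self]
  set z := u * v - 1 with hz
  have hdvd : (p : ℕ) ∣ z.val := by
    have : ((z.val : ℕ) : ZMod p) = 0 := by
      rw [← ZMod.natCast_zmod_val z] at h1
      rwa [map_natCast] at h1
    exact (ZMod.natCast_eq_zero_iff _ _).mp this
  obtain ⟨k, hk⟩ := hdvd
  have hznil : IsNilpotent z := by
    refine ⟨t, ?_⟩
    have : z = (p : ZMod (p ^ t)) * (k : ZMod (p ^ t)) := by
      rw [← ZMod.natCast_zmod_val z, hk]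
      push_cast; ring
    rw [this, mul_pow, ← Nat.cast_pow, ZMod.natCast_self, zero_mul]
  have huv : IsUnit (u * v) := by
    have : u * v = 1 + z := by rw [hz]; ring
    rw [this]
    exact hznil.isUnit_one_add
  exact isUnit_of_mul_isUnit_left huv

theorem stmt1 (p : ℕ) [Fact p.Prime] (d : ℕ) (hd : 2 ≤ d) (hpd : ¬ p ∣ d)
    (c r : ℤ_[p]) (m n : ℕ) (hm : 1 ≤ m)
    (hpre : PeriodType (fun x : ZMod p => x ^ d + PadicInt.toZMod c)
      (PadicInt.toZMod r) m n)
    (lam : ℤ_[p])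
    (hlam : lam = ∏ i ∈ Finset.range n,
      (d : ℤ_[p]) * ((fun x : ℤ_[p] => x ^ d + c)^[m + i] r) ^ (d - 1))
    (hunit : IsUnit lam) :
    ∀ t : ℕ, 1 ≤ t → ∃ nt : ℕ, 1 ≤ nt ∧
      PeriodType (fun x : ZMod (p ^ t) => x ^ d + PadicInt.toZModPow t c)
        (PadicInt.toZModPow t r) m nt := by
  intro t ht
  have ht' : t ≠ 0 := by omega
  haveI : NeZero (p ^ t) := ⟨pow_ne_zero t (Fact.out (p := p.Prime)).ne_zero⟩
  set π := ZMod.castHom (dvd_pow_self p ht') (ZMod p) with hπdef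
  set fbar : ZMod p → ZMod p := fun x : ZMod p => x ^ d + PadicInt.toZMod c with hfbar
  set F : ZMod (p ^ t) → ZMod (p ^ t) :=
    fun x : ZMod (p ^ t) => x ^ d + PadicInt.toZModPow t c with hFdef
  set a : ZMod (p ^ t) := PadicInt.toZModPow t r with ha
  have hπa : π a = PadicInt.toZMod r := cast_comp_toZModPow t ht' r
  have hπc : π (PadicInt.toZModPow t c) = PadicInt.toZMod c := cast_comp_toZModPow t ht' c
  -- semiconjugacy: π ∘ F^[j] = fbar^[j] ∘ π
  have hsemi : ∀ (j : ℕ) (x : ZMod (p ^ t)), π (F^[j] x) = fbar^[j] (π x) := by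
    intro j x
    have := iter_semiconj π d (PadicInt.toZModPow t c) j x
    rw [hπc] at this
    exact this
  obtain ⟨-, htail, hn, hper, hmin⟩ := hpre
  set bbar : ZMod p := fbar^[m] (PadicInt.toZMod r) with hbbar
  set b : ZMod (p ^ t) := F^[m] a with hb
  have hπb : π b = bbar := by rw [hb, hsemi, hπa]
  -- the product mod p is a unit
  have hlambar : IsUnit (∏ i ∈ Finset.range n,
      (d : ZMod p) * (fbar^[i] bbar) ^ (d - 1)) := by
    have h1 : PadicInt.toZMod lam = ∏ i ∈ Finset.range n,
        (d : ZMod p) * (fbar^[i] bbar) ^ (d - 1) := by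
      rw [hlam, map_prod]
      refine Finset.prod_congr rfl ?_
      intro i hi
      rw [map_mul, map_natCast, map_pow, iter_semiconj]
      congr 2
      rw [hbbar, ← Function.iterate_add_apply, add_comm i m]
    rw [← h1]
    exact hunit.map PadicInt.toZMod
  -- injectivity of F^[n] on the residue disc of bbar
  have hinj : ∀ x y : ZMod (p ^ t), π x = bbar → π y = bbar →
      F^[n] x = F^[n] y → x = y := by
    intro x y hx hy hxy
    obtain ⟨u, hu, hφu⟩ := iter_diff π d (PadicInt.toZModPow t c) n x y (by rw [hx, hy])
    rw [hπc, hx] at hφu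
    have huu : IsUnit u := by
      apply isUnit_of_isUnit_cast ht'
      rw [← hπdef, hφu]
      exact hlambar
    have : (x - y) * u = 0 := by rw [← hu, hxy, sub_self]
    have hxy0 : x - y = 0 := by
      obtain ⟨uu, huu⟩ := huu
      have := congrArg (· * ((uu⁻¹ : Units _) : ZMod (p ^ t))) this
      simpa [← huu, mul_assoc] using this
    exact sub_eq_zero.mp hxy0
  -- the disc is mapped to itself by F^[n]
  have hdisc : ∀ x : ZMod (p ^ t), π x = bbar → π (F^[n] x) = bbar := by
    intro x hx
    rw [hsemi, hx, hbbar]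
    exact hper
  -- the finite disc and the induced injective self-map
  let D := {x : ZMod (p ^ t) // π x = bbar}
  let G : D → D := fun x => ⟨F^[n] x.1, hdisc x.1 x.2⟩
  have hGinj : Function.Injective G := fun x y hxy =>
    Subtype.ext (hinj _ _ x.2 y.2 (congrArg Subtype.val hxy))
  have hGiter : ∀ (j : ℕ) (z : D), (G^[j] z).1 = (F^[n])^[j] z.1 := by
    intro j
    induction j with
    | zero => intro z; simp
    | succ j ih =>
      intro z
      rw [Function.iterate_succ_apply, Function.iterate_succ_apply, ih]
  let z0 : D := ⟨b, hπb⟩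
  have cancel : ∀ i j : ℕ, i < j → G^[i] z0 = G^[j] z0 → G^[j - i] z0 = z0 := by
    intro i j hij he
    apply hGinj.iterate i
    rw [← Function.iterate_add_apply, (by omega : i + (j - i) = j)]
    exact he.symm
  obtain ⟨i, j, hij, hmap⟩ := Finite.exists_ne_map_eq_of_infinite (fun k : ℕ => G^[k] z0)
  have key : ∃ k, 0 < k ∧ G^[k] z0 = z0 := by
    rcases Nat.lt_or_ge i j with h | h
    · exact ⟨j - i, by omega, cancel i j h hmap⟩
    · have h' : j < i := by omega
      exact ⟨i - j, by omega, cancel j i h' hmap.symm⟩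
  obtain ⟨k, hk, hGk⟩ := key
  have hFnk : F^[n * k] b = b := by
    have h1 := congrArg Subtype.val hGk
    rw [hGiter] at h1
    rw [Function.iterate_mul]
    exact h1
  -- extract the minimal period
  have hex : ∃ l : ℕ, 0 < l ∧ F^[l] b = b := ⟨n * k, by positivity, hFnk⟩
  refine ⟨Nat.find hex, (Nat.find_spec hex).1, ?_, ?_, ?_, ?_, ?_⟩
  · exact ⟨n * k, by positivity, by rw [← hb]; exact hFnk⟩
  · intro m' hm' ⟨l, hl, heq⟩
    refine htail m' hm' ⟨l, hl, ?_⟩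
    have h2 := congrArg π heq
    rw [hsemi, hsemi, hπa] at h2
    exact h2
  · exact (Nat.find_spec hex).1
  · rw [← hb]; exact (Nat.find_spec hex).2
  · intro l hl hFl
    rw [← hb] at hFl
    exact Nat.find_le ⟨hl, hFl⟩
end

section
/- Let p be a prime, d ≥ 2 with p ∤ d, and c ∈ ℤ_p. Define f(x) = x^d + c. Suppose 0 modulo p is a strictly preperiodic point of f modulo p (i.e., the reduction of the critical orbit over 𝔽_p has positive tail length). Then for any r ∈ ℤ_p whose reduction mod p is strictly preperiodic with period type (m, n) for f mod p, and for every t ≥ 1, the point r mod p^t is strictly preperiodic for f mod p^t with tail length exactly m. -/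
private lemma iter_comm' {α β : Type*} {g : α → α} {g' : β → β} {φ : α → β}
    (h : ∀ x, φ (g x) = g' (φ x)) : ∀ (k : ℕ) (x), φ (g^[k] x) = g'^[k] (φ x) := by
  intro k
  induction k with
  | zero => intro x; simp
  | succ k ih =>
    intro x
    rw [Function.iterate_succ_apply, Function.iterate_succ_apply, ih, h]

private lemma periodic_inj' {α : Type*} {g : α → α} {u v : α} {k l : ℕ}
    (hk : 0 < k) (hl : 0 < l) (hu : g^[k] u = u) (hv : g^[l] v = v)
    (h : g u = g v) : u = v := by
  have hku : g^[k * l] u = u := by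
    rw [Function.iterate_mul]; exact Function.iterate_fixed hu l
  have hlv : g^[k * l] v = v := by
    rw [mul_comm, Function.iterate_mul]; exact Function.iterate_fixed hv k
  obtain ⟨s, hs⟩ : ∃ s, k * l = s + 1 := ⟨k * l - 1, by have := Nat.mul_pos hk hl; omega⟩
  calc u = g^[s + 1] u := by rw [← hs]; exact hku.symm
    _ = g^[s] (g u) := Function.iterate_succ_apply g s u
    _ = g^[s] (g v) := by rw [h]
    _ = g^[s + 1] v := (Function.iterate_succ_apply g s v).symm
    _ = v := by rw [← hs]; exact hlv

private lemma per_shift' {α : Type*} {g : α → α} {z : α} {n : ℕ} (j : ℕ)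
    (h : g^[n] z = z) : g^[n] (g^[j] z) = g^[j] z := by
  rw [← Function.iterate_add_apply, add_comm n j, Function.iterate_add_apply, h]

theorem stmt2 (p : ℕ) [Fact p.Prime] (d : ℕ) (hd : 2 ≤ d) (hpd : ¬ p ∣ d)
    (c : ℤ_[p])
    (h0 : ∃ m0 n0 : ℕ, 1 ≤ m0 ∧
      PeriodType (fun x : ZMod p => x ^ d + PadicInt.toZMod c) (0 : ZMod p) m0 n0)
    (r : ℤ_[p]) (m n : ℕ) (hm : 1 ≤ m)
    (hpre : PeriodType (fun x : ZMod p => x ^ d + PadicInt.toZMod c)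
      (PadicInt.toZMod r) m n) :
    ∀ t : ℕ, 1 ≤ t → ∃ nt : ℕ, 1 ≤ nt ∧
      PeriodType (fun x : ZMod (p ^ t) => x ^ d + PadicInt.toZModPow t c)
        (PadicInt.toZModPow t r) m nt := by
  classical
  intro t ht
  have hp : p.Prime := Fact.out
  haveI : NeZero (p ^ t) := ⟨pow_ne_zero t hp.ne_zero⟩
  set g1 : ZMod p → ZMod p := fun x => x ^ d + PadicInt.toZMod c with hg1
  set g : ZMod (p ^ t) → ZMod (p ^ t) := fun x => x ^ d + PadicInt.toZModPow t c with hg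
  set a : ZMod (p ^ t) := PadicInt.toZModPow t r with ha
  have hdvd : p ∣ p ^ t := dvd_pow_self p (by omega)
  set φ : ZMod (p ^ t) →+* ZMod p := ZMod.castHom hdvd (ZMod p) with hφ
  have hcompat : ∀ z : ℤ_[p], φ (PadicInt.toZModPow t z) = PadicInt.toZMod z := by
    intro z
    have h1 : PadicInt.toZModPow t z = ((z.appr t : ℕ) : ZMod (p ^ t)) := rfl
    have h2 : PadicInt.toZMod z = ((z.zmodRepr : ℕ) : ZMod p) := rfl
    rw [h1, h2, map_natCast]
    apply PadicInt.zmod_congr_of_sub_mem_max_ideal z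
    · rw [PadicInt.maximalIdeal_eq_span_p]
      exact Ideal.span_singleton_le_span_singleton.mpr
        (dvd_pow_self _ (by omega : t ≠ 0)) (PadicInt.appr_spec t z)
    · exact PadicInt.sub_zmodRepr_mem z
  have hsemi : ∀ x, φ (g x) = g1 (φ x) := by
    intro x
    simp only [hg, hg1, map_add, map_pow, hcompat]
  have hcomm : ∀ (k : ℕ) (x), φ (g^[k] x) = g1^[k] (φ x) := iter_comm' hsemi
  have hφa : φ a = PadicInt.toZMod r := hcompat r
  -- 0 is not periodic mod p
  obtain ⟨m0, n0, hm0, hpt0⟩ := h0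
  have not_per0 : ¬ ∃ l, 0 < l ∧ g1^[l] (0 : ZMod p) = 0 := by
    have := hpt0.2.1 0 hm0
    simpa using this
  -- existence of a periodic iterate mod p^t
  have hex : ∃ M : ℕ, ∃ l, 0 < l ∧ g^[l] (g^[M] a) = g^[M] a := by
    obtain ⟨i, j, hij, hmap⟩ := Finite.exists_ne_map_eq_of_infinite (fun k : ℕ => g^[k] a)
    rcases hij.lt_or_gt with h | h
    · exact ⟨i, j - i, by omega, by
        rw [← Function.iterate_add_apply, Nat.sub_add_cancel h.le]; exact hmap.symm⟩
    · exact ⟨j, i - j, by omega, by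
        rw [← Function.iterate_add_apply, Nat.sub_add_cancel h.le]; exact hmap⟩
  set M := Nat.find hex with hMdef
  have hMspec := Nat.find_spec hex
  -- m ≤ M
  have hmM : m ≤ M := by
    by_contra hcon
    push_neg at hcon
    obtain ⟨l, hl, hper⟩ := hMspec
    refine hpre.2.1 M hcon ⟨l, hl, ?_⟩
    have := congrArg φ hper
    rw [hcomm, hcomm, hφa] at this
    exact this
  -- M ≤ m
  have hMm : M ≤ m := by
    by_contra hcon
    push_neg at hcon
    obtain ⟨l, hl, hper⟩ := hMspec
    set b : ZMod (p ^ t) := g^[M - 1] a with hb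
    obtain ⟨s, hs⟩ : ∃ s, M = s + 1 := ⟨M - 1, by omega⟩
    have hgb : g b = g^[M] a := by
      rw [hb, hs, Nat.add_sub_cancel, ← Function.iterate_succ_apply' g s, Nat.succ_eq_add_one, ← hs]
    set y : ZMod (p ^ t) := g^[l - 1] (g^[M] a) with hy
    obtain ⟨s2, hs2⟩ : ∃ s2, l = s2 + 1 := ⟨l - 1, by omega⟩
    have hgy : g y = g^[M] a := by
      rw [hy, hs2, Nat.add_sub_cancel, ← Function.iterate_succ_apply' g s2, Nat.succ_eq_add_one, ← hs2]
      exact hper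
    have hyper : g^[l] y = y := by
      rw [hy]; exact per_shift' (l - 1) hper
    -- φ b is periodic mod p with period n
    have hφb : φ b = g1^[M - 1] (PadicInt.toZMod r) := by rw [hb, hcomm, hφa]
    have hnpos : 0 < n := hpre.2.2.1
    have hφbper : g1^[n] (φ b) = φ b := by
      rw [hφb]
      have hsplit : M - 1 = (M - 1 - m) + m := by omega
      rw [hsplit, Function.iterate_add_apply]
      exact per_shift' (M - 1 - m) hpre.2.2.2.1
    -- φ y is periodic mod p with period l
    have hφyper : g1^[l] (φ y) = φ y := by
      have := congrArg φ hyper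
      rw [hcomm] at this
      exact this
    -- φ y = φ b
    have hgyb : g y = g b := hgy.trans hgb.symm
    have hφyb : φ y = φ b := by
      apply periodic_inj' hl hnpos hφyper hφbper
      have := congrArg φ hgyb
      rw [hsemi, hsemi] at this
      exact this
    -- φ b ≠ 0
    have hφbne : φ b ≠ 0 := by
      intro h
      exact not_per0 ⟨n, hnpos, by rw [← h]; exact hφbper⟩
    -- the geometric sum S is a unit
    set S : ZMod (p ^ t) := ∑ i ∈ Finset.range d, b ^ i * y ^ (d - 1 - i) with hS
    have hφS : φ S = (d : ZMod p) * (φ b) ^ (d - 1) := by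
      rw [hS, map_sum]
      have hterm : ∀ i ∈ Finset.range d, φ (b ^ i * y ^ (d - 1 - i)) = (φ b) ^ (d - 1) := by
        intro i hi
        rw [map_mul, map_pow, map_pow, hφyb, ← pow_add]
        congr 1
        have := Finset.mem_range.mp hi
        omega
      rw [Finset.sum_congr rfl hterm, Finset.sum_const, Finset.card_range, nsmul_eq_mul]
    have hφSne : φ S ≠ 0 := by
      rw [hφS]
      apply mul_ne_zero
      · simpa [ZMod.natCast_eq_zero_iff] using hpd
      · exact pow_ne_zero _ hφbne
    have hSunit : IsUnit S := by
      have h1 : ((S.val : ℕ) : ZMod (p ^ t)) = S := ZMod.natCast_zmod_val S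
      rw [← h1, ZMod.isUnit_iff_coprime]
      apply Nat.Coprime.pow_right
      rw [Nat.coprime_comm, hp.coprime_iff_not_dvd]
      intro hdvd2
      apply hφSne
      rw [hφ, ZMod.castHom_apply, ← ZMod.natCast_val]
      exact (ZMod.natCast_eq_zero_iff _ _).mpr hdvd2
    -- b = y
    have hbd : b ^ d = y ^ d := by
      have : y ^ d + PadicInt.toZModPow t c = b ^ d + PadicInt.toZModPow t c := hgyb
      linear_combination -this
    have hzero : S * (b - y) = 0 := by
      rw [hS, geom_sum₂_mul, hbd, sub_self]
    have hby : b = y := by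
      have := (hSunit.mul_right_eq_zero).mp hzero
      exact sub_eq_zero.mp this
    -- then g^[M-1] a is periodic, contradicting minimality of M
    have : g^[l] (g^[M - 1] a) = g^[M - 1] a := by
      rw [← hb, hby]; exact hyper
    exact Nat.find_min hex (by omega : M - 1 < M) ⟨l, hl, this⟩
  have hMeq : M = m := le_antisymm hMm hmM
  have hexn : ∃ l, 0 < l ∧ g^[l] (g^[m] a) = g^[m] a := by rw [← hMeq]; exact hMspec
  refine ⟨Nat.find hexn, (Nat.find_spec hexn).1, ⟨Nat.find hexn, Nat.find_spec hexn⟩,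
    ?_, (Nat.find_spec hexn).1, (Nat.find_spec hexn).2, ?_⟩
  · intro m' hm'
    exact Nat.find_min hex (by omega : m' < M)
  · intro l hl hper
    exact Nat.find_min' hexn ⟨hl, hper⟩
end

section
/- Let p be a prime, d ≥ 2 with p ∤ d, and c ∈ ℤ_p. Define f(x) = x^d + c. Suppose 0 modulo p is a periodic point of f modulo p over 𝔽_p with exact period n. Then either 0 is a wandering point of f over ℤ_p (its orbit is infinite), or 0 is a preperiodic point of f over ℤ_p whose eventual exact period equals n. -/
theorem stmt3 (p : ℕ) [Fact p.Prime] (d : ℕ) (hd : 2 ≤ d) (hpd : ¬ p ∣ d)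
    (c : ℤ_[p]) (n : ℕ) (hn : 0 < n)
    (hper : (fun x : ZMod p => x ^ d + PadicInt.toZMod c)^[n] 0 = 0 ∧
      ∀ k, 0 < k → k < n → (fun x : ZMod p => x ^ d + PadicInt.toZMod c)^[k] 0 ≠ 0) :
    (Set.range fun k : ℕ => (fun x : ℤ_[p] => x ^ d + c)^[k] 0).Infinite ∨
    ∃ m : ℕ,
      (fun x : ℤ_[p] => x ^ d + c)^[n] ((fun x : ℤ_[p] => x ^ d + c)^[m] 0) =
        (fun x : ℤ_[p] => x ^ d + c)^[m] 0 ∧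
      ∀ l, 0 < l →
        (fun x : ℤ_[p] => x ^ d + c)^[l] ((fun x : ℤ_[p] => x ^ d + c)^[m] 0) =
          (fun x : ℤ_[p] => x ^ d + c)^[m] 0 → n ≤ l := by
  classical
  set f : ℤ_[p] → ℤ_[p] := fun x => x ^ d + c with hfdef
  set fb : ZMod p → ZMod p := fun x => x ^ d + PadicInt.toZMod c with hfbdef
  -- reduction commutes with iteration
  have hred : ∀ (k : ℕ) (x : ℤ_[p]),
      PadicInt.toZMod (f^[k] x) = fb^[k] (PadicInt.toZMod x) := by
    intro k
    induction k with
    | zero => intro x; simp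
    | succ k ih =>
      intro x
      rw [Function.iterate_succ_apply, Function.iterate_succ_apply, ih]
      congr 1
      simp [hfdef, hfbdef, map_add, map_pow]
  -- dvd membership
  have hmem : ∀ x : ℤ_[p], (p : ℤ_[p]) ∣ x ↔ PadicInt.toZMod x = 0 := by
    intro x
    rw [← Ideal.mem_span_singleton, ← PadicInt.maximalIdeal_eq_span_p,
      ← PadicInt.ker_toZMod, RingHom.mem_ker]
  -- iteration of fb on 0 by multiples of n
  have hmuln : ∀ k : ℕ, fb^[n * k] (0 : ZMod p) = 0 := by
    intro k
    induction k with
    | zero => simp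
    | succ k ih =>
      have : n * (k + 1) = n * k + n := by ring
      rw [this, Function.iterate_add_apply, hper.1, ih]
  -- minimality mod p gives divisibility
  have hdvdn : ∀ t : ℕ, fb^[t] (0 : ZMod p) = 0 → n ∣ t := by
    intro t ht
    have h1 : t = n * (t / n) + t % n := (Nat.div_add_mod t n).symm
    have h2 : fb^[t % n] (0 : ZMod p) = 0 := by
      rw [h1, add_comm, Function.iterate_add_apply, hmuln] at ht
      exact ht
    rcases Nat.eq_zero_or_pos (t % n) with h | h
    · exact Nat.dvd_of_mod_eq_zero h
    · exact absurd h2 (hper.2 _ h (Nat.mod_lt _ hn))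
  -- difference divides difference of iterates
  have hdvdf : ∀ x y : ℤ_[p], x - y ∣ f x - f y := by
    intro x y
    have : f x - f y = x ^ d - y ^ d := by simp only [hfdef]; ring
    rw [this]
    exact sub_dvd_pow_sub_pow x y d
  have hdvditer : ∀ (k : ℕ) (x y : ℤ_[p]), x - y ∣ f^[k] x - f^[k] y := by
    intro k
    induction k with
    | zero => intro x y; simp
    | succ k ih =>
      intro x y
      rw [Function.iterate_succ_apply, Function.iterate_succ_apply]
      exact dvd_trans (hdvdf x y) (ih (f x) (f y))
  -- contraction step at residue 0
  have hcontr : ∀ x y : ℤ_[p], (p : ℤ_[p]) ∣ x → (p : ℤ_[p]) ∣ y →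
      (p : ℤ_[p]) * (x - y) ∣ f x - f y := by
    intro x y hx hy
    have hxy : f x - f y = (∑ i ∈ Finset.range d, x ^ i * y ^ (d - 1 - i)) * (x - y) := by
      rw [geom_sum₂_mul]
      simp only [hfdef]; ring
    rw [hxy]
    have hsum : (p : ℤ_[p]) ∣ ∑ i ∈ Finset.range d, x ^ i * y ^ (d - 1 - i) := by
      apply Finset.dvd_sum
      intro i hi
      rcases Nat.eq_zero_or_pos i with h | h
      · subst h
        have : d - 1 - 0 ≠ 0 := by omega
        exact Dvd.dvd.mul_left (dvd_pow hy this) _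
      · exact Dvd.dvd.mul_right (dvd_pow hx (by omega)) _
    exact mul_dvd_mul_right hsum (x - y)
  -- main case split
  by_cases hinf : (Set.range fun k : ℕ => f^[k] (0 : ℤ_[p])).Infinite
  · exact Or.inl hinf
  right
  -- find a collision
  have hninj : ¬ Function.Injective (fun k : ℕ => f^[k] (0 : ℤ_[p])) := by
    intro h
    exact hinf (Set.infinite_range_of_injective h)
  rw [Function.Injective] at hninj
  push_neg at hninj
  obtain ⟨i', j', hij', hne⟩ := hninj
  -- wlog i < j
  obtain ⟨i, j, hij, hlt⟩ : ∃ i j : ℕ, f^[i] (0 : ℤ_[p]) = f^[j] 0 ∧ i < j := by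
    rcases lt_or_gt_of_ne hne with h | h
    · exact ⟨i', j', hij', h⟩
    · exact ⟨j', i', hij'.symm, h⟩
  set m := n * (i + 1) with hm
  have hmi : i ≤ m := by
    have h := Nat.le_mul_of_pos_left (i + 1) hn
    rw [← hm] at h
    omega
  refine ⟨m, ?_, ?_⟩
  · -- f^[n] (f^[m] 0) = f^[m] 0
    set a := f^[m] (0 : ℤ_[p]) with ha
    set t := j - i with htdef
    have ht : 0 < t := by omega
    -- periodicity of a with period t
    have h1 : f^[t] (f^[i] (0 : ℤ_[p])) = f^[i] 0 := by
      rw [← Function.iterate_add_apply]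
      have e : t + i = j := by omega
      rw [e, ← hij]
    have hta : f^[t] a = a := by
      rw [ha, ← Function.iterate_add_apply]
      have e2 : t + m = (m - i) + (t + i) := by omega
      rw [e2, Function.iterate_add_apply, Function.iterate_add_apply f t i (0 : ℤ_[p]), h1,
        ← Function.iterate_add_apply]
      congr 1
      omega
    -- residue of a is 0
    have haz : PadicInt.toZMod a = 0 := by
      rw [ha, hred, map_zero, hm]
      exact hmuln (i + 1)
    have haD : (p : ℤ_[p]) ∣ a := (hmem a).mpr haz
    -- n divides t
    have hnt : n ∣ t := by
      apply hdvdn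
      have h := congrArg PadicInt.toZMod hta
      rw [hred, haz] at h
      exact h
    obtain ⟨s, hs⟩ := hnt
    have hspos : 0 < s := by
      rcases Nat.eq_zero_or_pos s with h | h
      · subst h; simp at hs; omega
      · exact h
    set b := f^[n] a with hb
    have hbz : PadicInt.toZMod b = 0 := by
      rw [hb, hred, haz, hper.1]
    have hbD : (p : ℤ_[p]) ∣ b := (hmem b).mpr hbz
    -- key: a - b = f^[n*s] a - f^[n*s] b
    have hkey : a - b = f^[n * s] a - f^[n * s] b := by
      have h1 : f^[n * s] a = a := by rw [← hs]; exact hta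
      have h2 : f^[n * s] b = b := by
        rw [hb, ← Function.iterate_add_apply, show n * s + n = n + n * s by ring,
          Function.iterate_add_apply, h1]
      rw [h1, h2]
    -- all powers of p divide a - b
    have hall : ∀ k : ℕ, (p : ℤ_[p]) ^ k ∣ a - b := by
      intro k
      induction k with
      | zero => simp
      | succ k ih =>
        have h1 : (p : ℤ_[p]) ^ (k + 1) ∣ f a - f b := by
          calc (p : ℤ_[p]) ^ (k + 1) = p * p ^ k := by ring
          _ ∣ p * (a - b) := mul_dvd_mul_left _ ih
          _ ∣ f a - f b := hcontr a b haD hbD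
        have h2 : f a - f b ∣ a - b := by
          rw [hkey]
          have h3 : n * s = (n * s - 1) + 1 := by
            have hpos' : 0 < n * s := Nat.mul_pos hn hspos
            omega
          rw [h3, Function.iterate_succ_apply, Function.iterate_succ_apply]
          exact hdvditer _ (f a) (f b)
        exact dvd_trans h1 h2
    -- conclude a = b
    have heq : a - b = 0 := by
      by_contra hne0
      have hpos : 0 < ‖a - b‖ := norm_pos_iff.mpr hne0
      have hp1 : (1 : ℝ) < p := by
        exact_mod_cast (Fact.out : p.Prime).one_lt
      have hinv : (p : ℝ)⁻¹ < 1 := inv_lt_one_of_one_lt₀ hp1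
      obtain ⟨k, hk⟩ := exists_pow_lt_of_lt_one hpos hinv
      have hle : ‖a - b‖ ≤ (p : ℝ) ^ (-(k : ℤ)) := by
        rw [PadicInt.norm_le_pow_iff_mem_span_pow, Ideal.mem_span_singleton]
        exact hall k
      have : (p : ℝ) ^ (-(k : ℤ)) = ((p : ℝ)⁻¹) ^ k := by
        rw [zpow_neg, zpow_natCast, inv_pow]
      rw [this] at hle
      linarith
    have : b = a := by
      have := sub_eq_zero.mp heq
      exact this.symm
    exact this
  · -- minimality
    intro l hl hfl
    by_contra hnl
    push_neg at hnl
    have haz : PadicInt.toZMod (f^[m] (0 : ℤ_[p])) = 0 := by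
      rw [hred, map_zero, hm]
      exact hmuln (i + 1)
    have h2 := congrArg PadicInt.toZMod hfl
    rw [hred, haz] at h2
    exact hper.2 l hl hnl h2
end

section
/- Let p be a prime, d ≥ 2 with p ∤ d, and c ∈ ℤ_p. Define f(x) = x^d + c and let ν be the p-adic valuation. Suppose 0 mod p is periodic of exact period n for f mod p over 𝔽_p. Then for all integers m ≥ 1 and all a with 0 < a ≤ n: (1) ν(f^{mn+a}(0) − f^{(m−1)n+a}(0)) = ν(f^{mn+1}(0) − f^{(m−1)n+1}(0)); and (2) (f^{mn}(0) − f^{(m−1)n}(0)) divides (f^{mn+1}(0) − f^{(m−1)n+1}(0)) in ℤ_p. -/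
theorem stmt4 (p : ℕ) [Fact p.Prime] (d : ℕ) (hd : 2 ≤ d) (hpd : ¬ p ∣ d)
    (c : ℤ_[p]) (n : ℕ) (hn : 0 < n)
    (hper : (fun x : ZMod p => x ^ d + PadicInt.toZMod c)^[n] 0 = 0 ∧
      ∀ k, 0 < k → k < n → (fun x : ZMod p => x ^ d + PadicInt.toZMod c)^[k] 0 ≠ 0)
    (f : ℤ_[p] → ℤ_[p]) (hf : f = fun x => x ^ d + c) :
    ∀ m : ℕ, 1 ≤ m → ∀ a : ℕ, 0 < a → a ≤ n →
      ((f^[m * n + a] 0 - f^[(m - 1) * n + a] 0).valuation =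
        (f^[m * n + 1] 0 - f^[(m - 1) * n + 1] 0).valuation) ∧
      ((f^[m * n] 0 - f^[(m - 1) * n] 0) ∣
        (f^[m * n + 1] 0 - f^[(m - 1) * n + 1] 0)) := by
  set g : ZMod p → ZMod p := fun x => x ^ d + PadicInt.toZMod c with hg
  -- toZMod commutes with iteration
  have hmap : ∀ k, PadicInt.toZMod (f^[k] 0) = g^[k] 0 := by
    intro k
    induction k with
    | zero => simp
    | succ k ih =>
      rw [Function.iterate_succ_apply', Function.iterate_succ_apply']
      have hfx : f (f^[k] 0) = (f^[k] 0) ^ d + c := by rw [hf]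
      rw [hfx, map_add, map_pow, ih]
  -- periodicity mod p
  have hperiod : ∀ m k : ℕ, g^[m * n + k] 0 = g^[k] 0 := by
    intro m
    induction m with
    | zero => simp
    | succ m ih =>
      intro k
      have h : (m + 1) * n + k = (m * n + k) + n := by ring
      rw [h, Function.iterate_add_apply, hper.1, ih]
  -- key step identity
  have hstep : ∀ j : ℕ,
      f^[j + 1 + n] 0 - f^[j + 1] 0
        = (∑ i ∈ Finset.range d, (f^[j + n] 0) ^ i * (f^[j] 0) ^ (d - 1 - i)) *
            (f^[j + n] 0 - f^[j] 0) := by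
    intro j
    have h1 : j + 1 + n = (j + n) + 1 := by ring
    have hfx : ∀ x, f x = x ^ d + c := fun x => by rw [hf]
    rw [h1, Function.iterate_succ_apply', Function.iterate_succ_apply', hfx, hfx, geom_sum₂_mul]
    ring
  -- valuation vanishes when reduction is nonzero
  have hval0 : ∀ x : ℤ_[p], PadicInt.toZMod x ≠ 0 → x.valuation = 0 := by
    intro x hx
    have hx0 : x ≠ 0 := by rintro rfl; simp at hx
    have hu : IsUnit x := by
      by_contra h
      exact hx (by
        have : x ∈ IsLocalRing.maximalIdeal ℤ_[p] := by
          rw [IsLocalRing.mem_maximalIdeal]; exact h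
        rwa [← PadicInt.ker_toZMod, RingHom.mem_ker] at this)
    have hnorm : ‖x‖ = 1 := PadicInt.isUnit_iff.mp hu
    have h1 : ((p : ℝ)) ^ (-(x.valuation : ℤ)) = 1 := by
      rw [← PadicInt.norm_eq_zpow_neg_valuation hx0, hnorm]
    have hp1 : (1 : ℝ) < p := by exact_mod_cast (Fact.out : p.Prime).one_lt
    have := (zpow_eq_one_iff_right₀ (by positivity) (by linarith)).mp h1
    omega
  -- valuation is multiplicative
  have hvmul : ∀ x y : ℤ_[p], x ≠ 0 → y ≠ 0 →
      (x * y).valuation = x.valuation + y.valuation := by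
    intro x y hx hy
    have hx' : (x : ℚ_[p]) ≠ 0 := PadicInt.coe_ne_zero.mpr hx
    have hy' : (y : ℚ_[p]) ≠ 0 := PadicInt.coe_ne_zero.mpr hy
    exact PadicInt.valuation_mul hx hy
  intro m hm a ha han
  have hmn : m * n = (m - 1) * n + n := by
    have : m - 1 + 1 = m := Nat.succ_pred_eq_of_pos hm
    nlinarith [this]
  -- the multiplier is a unit for 0 < a < n
  have hSunit : ∀ b : ℕ, 0 < b → b < n →
      PadicInt.toZMod (∑ i ∈ Finset.range d,
        (f^[(m - 1) * n + b + n] 0) ^ i * (f^[(m - 1) * n + b] 0) ^ (d - 1 - i)) ≠ 0 := by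
    intro b hb hbn
    have e1 : PadicInt.toZMod (f^[(m - 1) * n + b + n] 0) = g^[b] 0 := by
      have h : (m - 1) * n + b + n = m * n + b := by omega
      rw [h, hmap, hperiod]
    have e2 : PadicInt.toZMod (f^[(m - 1) * n + b] 0) = g^[b] 0 := by
      rw [hmap, hperiod]
    have hgb : g^[b] 0 ≠ 0 := hper.2 b hb hbn
    rw [map_sum]
    have : ∀ i ∈ Finset.range d,
        PadicInt.toZMod ((f^[(m - 1) * n + b + n] 0) ^ i * (f^[(m - 1) * n + b] 0) ^ (d - 1 - i))
          = (g^[b] 0) ^ (d - 1) := by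
      intro i hi
      rw [map_mul, map_pow, map_pow, e1, e2, ← pow_add]
      congr 1
      have := Finset.mem_range.mp hi
      omega
    rw [Finset.sum_congr rfl this, Finset.sum_const, Finset.card_range, nsmul_eq_mul]
    intro h
    rcases mul_eq_zero.mp h with h | h
    · exact hpd ((ZMod.natCast_eq_zero_iff d p).mp h)
    · exact hgb (pow_eq_zero_iff (by omega) |>.mp h)
  -- valuation is constant along the block
  have hvconst : ∀ b : ℕ, 0 < b → b ≤ n →
      (f^[(m - 1) * n + b + n] 0 - f^[(m - 1) * n + b] 0).valuation
        = (f^[(m - 1) * n + 1 + n] 0 - f^[(m - 1) * n + 1] 0).valuation := by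
    intro b
    induction b with
    | zero => omega
    | succ b ih =>
      intro _ hbn
      rcases Nat.eq_zero_or_pos b with rfl | hb
      · rfl
      · have hbn' : b < n := by omega
        have hs := hstep ((m - 1) * n + b)
        have key : ((m - 1) * n + b + 1) = ((m - 1) * n + (b + 1)) := by ring
        rw [show (m - 1) * n + (b + 1) + n = (m - 1) * n + b + 1 + n by ring,
          show (m - 1) * n + (b + 1) = (m - 1) * n + b + 1 by ring, hs]
        set S := ∑ i ∈ Finset.range d,
          (f^[(m - 1) * n + b + n] 0) ^ i * (f^[(m - 1) * n + b] 0) ^ (d - 1 - i) with hS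
        set D := f^[(m - 1) * n + b + n] 0 - f^[(m - 1) * n + b] 0 with hD
        rcases eq_or_ne D 0 with hD0 | hD0
        · rw [hD0, mul_zero]
          rw [← ih hb (le_of_lt hbn'), hD0]
        · have hS0 : PadicInt.toZMod S ≠ 0 := hSunit b hb hbn'
          have hSne : S ≠ 0 := fun h => hS0 (by rw [h]; simp)
          rw [hvmul S D hSne hD0, hval0 S hS0, zero_add]
          exact ih hb (le_of_lt hbn')
  constructor
  · have h1 := hvconst a ha han
    have h2 := hvconst 1 one_pos hn
    rw [show m * n + a = (m - 1) * n + a + n by omega,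
      show m * n + 1 = (m - 1) * n + 1 + n by omega]
    rw [h1, h2]
  · have hs := hstep ((m - 1) * n)
    rw [show m * n + 1 = (m - 1) * n + 1 + n by omega,
      show m * n = (m - 1) * n + n by omega]
    exact ⟨_, by rw [hs]; ring⟩
end

section
/- Let p be a prime, d ≥ 2 with p > d, and c ∈ ℤ_p. Define f(x) = x^d + c. If 0 modulo p is a periodic point for f modulo p over 𝔽_p with exact period n, then either 0 is a periodic point for f over ℤ_p with exact period n, or 0 is a wandering point (its orbit under f is infinite). In particular, 0 is never strictly preperiodic for f over ℤ_p. -/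
open Finset

section Aux
variable {p : ℕ} [hp : Fact p.Prime]

lemma iter_toZMod (d : ℕ) (c : ℤ_[p]) (k : ℕ) (x : ℤ_[p]) :
    PadicInt.toZMod ((fun x : ℤ_[p] => x ^ d + c)^[k] x)
      = (fun y : ZMod p => y ^ d + PadicInt.toZMod c)^[k] (PadicInt.toZMod x) := by
  induction k generalizing x with
  | zero => simp
  | succ k ih =>
    rw [Function.iterate_succ_apply, Function.iterate_succ_apply, ih]
    simp [map_add, map_pow]

-- mod p orbit facts
lemma orbit_mod (F : ZMod p → ZMod p) {n : ℕ} (hn : 0 < n) (hFn : F^[n] 0 = 0) (k : ℕ) :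
    F^[k] 0 = F^[k % n] 0 := by
  conv_lhs => rw [← Nat.mod_add_div k n, Function.iterate_add_apply]
  congr 1
  rw [Function.iterate_mul]
  exact Function.iterate_fixed hFn _

lemma orbit_inj (F : ZMod p → ZMod p) {n : ℕ} (hn : 0 < n) (hFn : F^[n] 0 = 0)
    (hFmin : ∀ k, 0 < k → k < n → F^[k] 0 ≠ 0) {r s : ℕ} (hr : r < n) (hs : s < n)
    (h : F^[r] 0 = F^[s] 0) : r = s := by
  rcases lt_trichotomy r s with hlt | heq | hgt
  · exfalso
    have h2 : F^[n - s] (F^[r] 0) = F^[n - s] (F^[s] 0) := by rw [h]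
    rw [← Function.iterate_add_apply, ← Function.iterate_add_apply, Nat.sub_add_cancel hs.le,
      hFn] at h2
    exact hFmin (n - s + r) (by omega) (by omega) h2
  · exact heq
  · exfalso
    have h2 : F^[n - r] (F^[r] 0) = F^[n - r] (F^[s] 0) := by rw [h]
    rw [← Function.iterate_add_apply, ← Function.iterate_add_apply, Nat.sub_add_cancel hr.le,
      hFn] at h2
    exact hFmin (n - r + s) (by omega) (by omega) h2.symm

lemma orbit_mod_eq (F : ZMod p → ZMod p) {n : ℕ} (hn : 0 < n) (hFn : F^[n] 0 = 0)
    (hFmin : ∀ k, 0 < k → k < n → F^[k] 0 ≠ 0) {a b : ℕ}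
    (h : F^[a] 0 = F^[b] 0) : a % n = b % n := by
  refine orbit_inj F hn hFn hFmin (Nat.mod_lt _ hn) (Nat.mod_lt _ hn) ?_
  rw [← orbit_mod F hn hFn a, ← orbit_mod F hn hFn b, h]

lemma padic_sum_norm_le {ι : Type*} {s : Finset ι} {g : ι → ℤ_[p]} {B : ℝ} (hB : 0 ≤ B)
    (h : ∀ i ∈ s, ‖g i‖ ≤ B) : ‖∑ i ∈ s, g i‖ ≤ B := by
  induction s using Finset.cons_induction with
  | empty => simpa using hB
  | cons a s ha ih =>
    rw [Finset.sum_cons]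
    refine le_trans (PadicInt.nonarchimedean _ _) (max_le (h a (by simp)) (ih ?_))
    exact fun i hi => h i (by simp [hi])

lemma toZMod_zero_norm {x : ℤ_[p]} (h : PadicInt.toZMod x = 0) : ‖x‖ ≤ (p : ℝ)⁻¹ := by
  have hx : x ∈ RingHom.ker (PadicInt.toZMod : ℤ_[p] →+* ZMod p) := h
  rw [PadicInt.ker_toZMod, PadicInt.maximalIdeal_eq_span_p, Ideal.mem_span_singleton] at hx
  obtain ⟨t, rfl⟩ := hx
  rw [norm_mul, PadicInt.norm_p]
  calc (p:ℝ)⁻¹ * ‖t‖ ≤ (p:ℝ)⁻¹ * 1 := by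
        refine mul_le_mul_of_nonneg_left (PadicInt.norm_le_one t) (by positivity)
    _ = (p:ℝ)⁻¹ := mul_one _


lemma step_nonexpand (d : ℕ) (c : ℤ_[p]) (x y : ℤ_[p]) :
    ‖(fun x : ℤ_[p] => x ^ d + c) x - (fun x : ℤ_[p] => x ^ d + c) y‖ ≤ ‖x - y‖ := by
  simp only
  rw [add_sub_add_right_eq_sub, ← geom_sum₂_mul x y d, norm_mul]
  calc ‖∑ i ∈ range d, x ^ i * y ^ (d - 1 - i)‖ * ‖x - y‖ ≤ 1 * ‖x - y‖ :=
        mul_le_mul_of_nonneg_right (PadicInt.norm_le_one _) (norm_nonneg _)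
    _ = ‖x - y‖ := one_mul _

lemma iter_nonexpand (d : ℕ) (c : ℤ_[p]) (k : ℕ) (x y : ℤ_[p]) :
    ‖(fun x : ℤ_[p] => x ^ d + c)^[k] x - (fun x : ℤ_[p] => x ^ d + c)^[k] y‖ ≤ ‖x - y‖ := by
  induction k generalizing x y with
  | zero => simp
  | succ k ih =>
    rw [Function.iterate_succ_apply, Function.iterate_succ_apply]
    exact le_trans (ih _ _) (step_nonexpand d c x y)

lemma step_contract (d : ℕ) (hd : 2 ≤ d) (c : ℤ_[p]) {x y : ℤ_[p]}
    (hx : PadicInt.toZMod x = 0) (hy : PadicInt.toZMod y = 0) :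
    ‖(fun x : ℤ_[p] => x ^ d + c) x - (fun x : ℤ_[p] => x ^ d + c) y‖ ≤ (p:ℝ)⁻¹ * ‖x - y‖ := by
  simp only
  rw [add_sub_add_right_eq_sub, ← geom_sum₂_mul x y d, norm_mul]
  refine mul_le_mul_of_nonneg_right ?_ (norm_nonneg _)
  refine toZMod_zero_norm ?_
  rw [map_sum]
  refine Finset.sum_eq_zero fun i hi => ?_
  rw [map_mul, map_pow, map_pow, hx, hy]
  rcases Nat.eq_zero_or_pos i with h0 | h0
  · subst h0
    simp only [pow_zero, one_mul, Nat.sub_zero]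
    exact zero_pow (by omega)
  · rw [zero_pow (by omega : i ≠ 0), zero_mul]


lemma g_contract (d : ℕ) (hd : 2 ≤ d) (c : ℤ_[p]) {n : ℕ} (hn : 0 < n)
    {x y : ℤ_[p]} (hx : PadicInt.toZMod x = 0) (hy : PadicInt.toZMod y = 0) :
    ‖(fun x : ℤ_[p] => x ^ d + c)^[n] x - (fun x : ℤ_[p] => x ^ d + c)^[n] y‖
      ≤ (p:ℝ)⁻¹ * ‖x - y‖ := by
  obtain ⟨m, rfl⟩ : ∃ m, n = m + 1 := ⟨n - 1, by omega⟩
  rw [Function.iterate_succ_apply, Function.iterate_succ_apply]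
  exact le_trans (iter_nonexpand d c m _ _) (step_contract d hd c hx hy)

lemma gk_contract (d : ℕ) (hd : 2 ≤ d) (c : ℤ_[p]) {n : ℕ} (hn : 0 < n)
    (hFn : (fun y : ZMod p => y ^ d + PadicInt.toZMod c)^[n] (0 : ZMod p) = 0)
    (k : ℕ) {x y : ℤ_[p]} (hx : PadicInt.toZMod x = 0) (hy : PadicInt.toZMod y = 0) :
    ‖(fun x : ℤ_[p] => x ^ d + c)^[k * n] x - (fun x : ℤ_[p] => x ^ d + c)^[k * n] y‖
      ≤ ((p:ℝ)⁻¹) ^ k * ‖x - y‖ := by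
  induction k generalizing x y with
  | zero => simp
  | succ k ih =>
    have hstab : ∀ z : ℤ_[p], PadicInt.toZMod z = 0 →
        PadicInt.toZMod ((fun x : ℤ_[p] => x ^ d + c)^[n] z) = 0 := by
      intro z hz
      rw [iter_toZMod, hz, hFn]
    rw [show (k + 1) * n = k * n + n by ring, Function.iterate_add_apply,
      Function.iterate_add_apply]
    calc ‖_ - _‖ ≤ ((p:ℝ)⁻¹) ^ k *
          ‖(fun x : ℤ_[p] => x ^ d + c)^[n] x - (fun x : ℤ_[p] => x ^ d + c)^[n] y‖ :=
          ih (hstab x hx) (hstab y hy)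
      _ ≤ ((p:ℝ)⁻¹) ^ k * ((p:ℝ)⁻¹ * ‖x - y‖) := by
          refine mul_le_mul_of_nonneg_left (g_contract d hd c hn hx hy) (by positivity)
      _ = ((p:ℝ)⁻¹) ^ (k + 1) * ‖x - y‖ := by ring


lemma norm_nat_eq_one {d : ℕ} (hd0 : 0 < d) (hpd : d < p) : ‖(d : ℤ_[p])‖ = 1 := by
  refine le_antisymm (PadicInt.norm_le_one _) ?_
  by_contra h
  push_neg at h
  have h2 : ‖((d : ℤ) : ℤ_[p])‖ < 1 := by push_cast; exact h
  rw [PadicInt.norm_int_lt_one_iff_dvd] at h2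
  have := Int.le_of_dvd (by exact_mod_cast hd0) h2
  omega

lemma key_ineq {d : ℕ} (hd : 2 ≤ d) (hpd : d < p) {u v : ℤ_[p]} (huv : u ≠ v)
    (hpow : u ^ d = v ^ d) (hv : v ≠ 0) (hnorm : ‖u‖ = ‖v‖) : ‖v‖ ≤ ‖u - v‖ := by
  set S : ℤ_[p] := ∑ i ∈ range d, u ^ i * v ^ (d - 1 - i) with hS
  have hS0 : S = 0 := by
    have h1 : S * (u - v) = 0 := by rw [geom_sum₂_mul, hpow, sub_self]
    rcases mul_eq_zero.mp h1 with h | h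
    · exact h
    · exact absurd (sub_eq_zero.mp h) huv
  have hdv : (d : ℤ_[p]) * v ^ (d - 1) = ∑ i ∈ range d, v ^ i * v ^ (d - 1 - i) := by
    rw [Finset.sum_congr rfl (fun i hi => ?_), Finset.sum_const, card_range, nsmul_eq_mul]
    rw [← pow_add]
    congr 1
    have := Finset.mem_range.mp hi
    omega
  have hT : (d : ℤ_[p]) * v ^ (d - 1) = -(∑ i ∈ range d, (u ^ i - v ^ i) * v ^ (d - 1 - i)) := by
    have : ∑ i ∈ range d, (u ^ i - v ^ i) * v ^ (d - 1 - i) = S - (d : ℤ_[p]) * v ^ (d - 1) := by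
      rw [hdv, ← Finset.sum_sub_distrib]
      exact Finset.sum_congr rfl fun i hi => by ring
    rw [this, hS0, zero_sub, neg_neg]
  have hbound : ∀ i ∈ range d, ‖(u ^ i - v ^ i) * v ^ (d - 1 - i)‖ ≤ ‖u - v‖ * ‖v‖ ^ (d - 2) := by
    intro i hi
    have hid : i < d := Finset.mem_range.mp hi
    rcases Nat.eq_zero_or_pos i with h0 | h0
    · subst h0; simp; positivity
    · rw [← geom_sum₂_mul u v i, norm_mul, norm_mul]
      have hsum : ‖∑ t ∈ range i, u ^ t * v ^ (i - 1 - t)‖ ≤ ‖v‖ ^ (i - 1) := by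
        refine padic_sum_norm_le (by positivity) fun t ht => ?_
        rw [norm_mul, norm_pow, norm_pow, hnorm, ← pow_add]
        have := Finset.mem_range.mp ht
        exact le_of_eq (by congr 1; omega)
      calc ‖∑ t ∈ range i, u ^ t * v ^ (i - 1 - t)‖ * ‖u - v‖ * ‖v ^ (d - 1 - i)‖
          ≤ ‖v‖ ^ (i - 1) * ‖u - v‖ * ‖v‖ ^ (d - 1 - i) := by
            rw [norm_pow]
            refine mul_le_mul_of_nonneg_right (mul_le_mul_of_nonneg_right hsum (norm_nonneg _))
              (by positivity)
        _ = ‖u - v‖ * ‖v‖ ^ (d - 2) := by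
            rw [mul_comm (‖v‖ ^ (i - 1)) _, mul_assoc, ← pow_add]
            congr 2
            omega
  have hmain : ‖v‖ ^ (d - 1) ≤ ‖u - v‖ * ‖v‖ ^ (d - 2) := by
    calc ‖v‖ ^ (d - 1) = ‖(d : ℤ_[p]) * v ^ (d - 1)‖ := by
          rw [norm_mul, norm_pow, norm_nat_eq_one (by omega) hpd, one_mul]
      _ = ‖∑ i ∈ range d, (u ^ i - v ^ i) * v ^ (d - 1 - i)‖ := by rw [hT, norm_neg]
      _ ≤ ‖u - v‖ * ‖v‖ ^ (d - 2) := padic_sum_norm_le (by positivity) hbound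
  have hvpos : (0:ℝ) < ‖v‖ := norm_pos_iff.mpr hv
  have hexp : ‖v‖ ^ (d - 1) = ‖v‖ * ‖v‖ ^ (d - 2) := by
    rw [← pow_succ']
    congr 1
    omega
  rw [hexp] at hmain
  exact le_of_mul_le_mul_right hmain (by positivity)

end Aux

theorem stmt5 (p : ℕ) [Fact p.Prime] (d : ℕ) (hd : 2 ≤ d) (hpd : d < p)
    (c : ℤ_[p]) (n : ℕ) (hn : 0 < n)
    (hper : (fun x : ZMod p => x ^ d + PadicInt.toZMod c)^[n] 0 = 0 ∧
      ∀ k, 0 < k → k < n → (fun x : ZMod p => x ^ d + PadicInt.toZMod c)^[k] 0 ≠ 0)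
    (f : ℤ_[p] → ℤ_[p]) (hf : f = fun x => x ^ d + c) :
    ((f^[n] 0 = 0 ∧ ∀ k, 0 < k → k < n → f^[k] 0 ≠ 0) ∨
      (Set.range fun k : ℕ => f^[k] 0).Infinite) ∧
    ¬ (¬ (Set.range fun k : ℕ => f^[k] 0).Infinite ∧ ∀ l, 0 < l → f^[l] 0 ≠ 0) := by
  classical
  subst hf
  obtain ⟨hFn, hFmin⟩ := hper
  set fZ : ℤ_[p] → ℤ_[p] := fun x => x ^ d + c with hfZ
  set F : ZMod p → ZMod p := fun y => y ^ d + PadicInt.toZMod c with hFdef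
  have hp1 : (1 : ℝ) < (p : ℝ) := by exact_mod_cast (Fact.out : p.Prime).one_lt
  have hpinv1 : (p : ℝ)⁻¹ < 1 := by
    rw [inv_lt_one_iff₀]; right; exact hp1
  have hpinv0 : (0 : ℝ) ≤ (p : ℝ)⁻¹ := by positivity
  have hred : ∀ k : ℕ, PadicInt.toZMod (fZ^[k] 0) = F^[k] 0 := by
    intro k
    have := iter_toZMod (p := p) d c k 0
    rwa [map_zero] at this
  have hmod : ∀ a b : ℕ, fZ^[a] 0 = fZ^[b] 0 → a % n = b % n := by
    intro a b h
    refine orbit_mod_eq F hn hFn hFmin ?_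
    rw [← hred, ← hred, h]
  have hmodp : ∀ k : ℕ, F^[k] 0 = F^[k % n] 0 := orbit_mod F hn hFn
  -- main claim
  have main : ¬ (Set.range fun k : ℕ => fZ^[k] 0).Infinite →
      (fZ^[n] 0 = 0 ∧ ∀ k, 0 < k → k < n → fZ^[k] 0 ≠ 0) := by
    intro hfin
    have hpart2 : ∀ k, 0 < k → k < n → fZ^[k] 0 ≠ 0 := by
      intro k hk1 hk2 h
      apply hFmin k hk1 hk2
      rw [← hred, h, map_zero]
    refine ⟨?_, hpart2⟩
    have hninj : ¬ Function.Injective (fun k : ℕ => fZ^[k] 0) := fun hinj =>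
      hfin (Set.infinite_range_of_injective hinj)
    rw [Function.not_injective_iff] at hninj
    have hP : ∃ i, ∃ j, i < j ∧ fZ^[i] 0 = fZ^[j] 0 := by
      obtain ⟨a, b, hab, hne⟩ := hninj
      rcases hne.lt_or_gt with h | h
      · exact ⟨a, b, h, hab⟩
      · exact ⟨b, a, h, hab.symm⟩
    obtain ⟨j, hij, heqij⟩ := Nat.find_spec hP
    set i0 := Nat.find hP with hi0
    rcases Nat.eq_zero_or_pos i0 with h0 | h0
    · -- i0 = 0 : 0 is periodic; contract to exact period n
      rw [h0] at heqij hij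
      simp only [Function.iterate_zero_apply] at heqij
      have hjmod : j % n = 0 := by
        have := hmod j 0 heqij.symm
        simpa using this
      obtain ⟨m, hm⟩ := Nat.dvd_of_mod_eq_zero hjmod
      have hm1 : 1 ≤ m := by
        rcases Nat.eq_zero_or_pos m with h | h
        · subst h
          rw [Nat.mul_zero] at hm
          omega
        · exact h
      set b := fZ^[n] 0 with hb
      have hφb : PadicInt.toZMod b = 0 := by rw [hb, hred, hFn]
      have hφ0 : PadicInt.toZMod (0 : ℤ_[p]) = 0 := map_zero _
      have h0fix : fZ^[m * n] (0 : ℤ_[p]) = 0 := by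
        rw [show m * n = j from by rw [hm, Nat.mul_comm]]
        exact heqij.symm
      have hbfix : fZ^[m * n] b = b := by
        rw [hb, ← Function.iterate_add_apply, show m * n + n = n + m * n by omega,
          Function.iterate_add_apply, h0fix]
      have hcontr := gk_contract d hd c hn hFn m hφb hφ0
      rw [hbfix, h0fix, sub_zero] at hcontr
      have hq : ((p : ℝ)⁻¹) ^ m < 1 := pow_lt_one₀ hpinv0 hpinv1 (by omega)
      have hbnorm : ‖b‖ = 0 := by nlinarith [norm_nonneg b]
      exact norm_eq_zero.mp hbnorm
    · -- i0 ≥ 1 : derive a contradiction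
      exfalso
      obtain ⟨i', hi'⟩ : ∃ i', i0 = i' + 1 := ⟨i0 - 1, by omega⟩
      rw [hi'] at heqij hij
      set u := fZ^[i'] 0 with hu
      set v := fZ^[j - 1] 0 with hv
      have hfuv : fZ u = fZ v := by
        have h1 : fZ^[i' + 1] 0 = fZ (fZ^[i'] 0) := Function.iterate_succ_apply' fZ i' 0
        have h2 : fZ^[j] 0 = fZ (fZ^[j - 1] 0) := by
          conv_lhs => rw [show j = (j - 1) + 1 by omega]
          exact Function.iterate_succ_apply' fZ (j - 1) 0
        rw [hu, hv, ← h1, ← h2]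
        exact heqij
      have hpow : u ^ d = v ^ d := by
        have : u ^ d + c = v ^ d + c := hfuv
        exact add_right_cancel this
      have hne_uv : u ≠ v := by
        intro h
        have := Nat.find_min hP (show i' < i0 by omega) ⟨j - 1, by omega, h⟩
        exact this
      have hmod1 : (i' + 1) % n = j % n := hmod _ _ heqij
      have hmod2 : i' % n = (j - 1) % n := by
        have h1 : Nat.ModEq n (i' + 1) j := hmod1
        have h2 : Nat.ModEq n (i' + 1 + (n - 1)) (j + (n - 1)) := h1.add_right _
        rw [show i' + 1 + (n - 1) = i' + n by omega, show j + (n - 1) = j - 1 + n by omega] at h2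
        exact h2.add_right_cancel' _
      have hφu : PadicInt.toZMod u = F^[i'] 0 := hred i'
      have hφv : PadicInt.toZMod v = F^[i'] 0 := by
        rw [hv, hred, hmodp (j - 1), ← hmod2, ← hmodp i']
      by_cases hw : F^[i'] 0 = 0
      · -- both in the open unit disk: contraction argument
        have hφu0 : PadicInt.toZMod u = 0 := by rw [hφu, hw]
        have hφv0 : PadicInt.toZMod v = 0 := by rw [hφv, hw]
        have hvne : v ≠ 0 := by
          intro h
          apply hne_uv
          rw [h]
          have : u ^ d = 0 := by rw [hpow, h, zero_pow (by omega)]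
          exact pow_eq_zero_iff (by omega) |>.mp this
        have hnormuv : ‖u‖ = ‖v‖ := by
          have hnd : ‖u‖ ^ d = ‖v‖ ^ d := by
            rw [← norm_pow, ← norm_pow, hpow]
          rcases lt_trichotomy ‖u‖ ‖v‖ with h | h | h
          · exact absurd hnd (ne_of_lt (pow_lt_pow_left₀ h (norm_nonneg _) (by omega)))
          · exact h
          · exact absurd hnd.symm (ne_of_lt (pow_lt_pow_left₀ h (norm_nonneg _) (by omega)))
        have hi'mod : i' % n = 0 := by
          have : F^[i'] 0 = F^[0] 0 := by simpa using hw
          simpa using orbit_mod_eq F hn hFn hFmin this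
        have hj1mod : (j - 1) % n = 0 := by omega
        obtain ⟨k, hk⟩ := Nat.dvd_of_mod_eq_zero hi'mod
        obtain ⟨k', hk'⟩ := Nat.dvd_of_mod_eq_zero hj1mod
        have hkk' : k < k' := by
          have h5 : n * k < n * k' := by omega
          exact Nat.lt_of_mul_lt_mul_left h5
        set m := k' - k with hmdef
        have hm1 : 1 ≤ m := by omega
        set am := fZ^[m * n] (0 : ℤ_[p]) with ham
        have hφ0 : PadicInt.toZMod (0 : ℤ_[p]) = 0 := map_zero _
        have hk'eq : k' = k + m := by omega
        have he1 : j - 1 = k * n + m * n := by rw [hk', hk'eq]; ring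
        have he2 : i' = k * n := by rw [hk]; ring
        have hφam : PadicInt.toZMod am = 0 := by
          rw [ham, hred, hmodp (m * n), Nat.mul_mod_left]
          simp
        have hueq : u = fZ^[k * n] 0 := by rw [hu, he2]
        have hveq : v = fZ^[k * n] am := by
          rw [hv, ham, ← Function.iterate_add_apply, ← he1]
        have hveq2 : v = fZ^[m * n] u := by
          rw [hv, hu, ← Function.iterate_add_apply,
            show m * n + i' = j - 1 from by rw [he1, he2]; ring]
        -- step 1 : ‖am - v‖ < ‖v‖ hence ‖am‖ = ‖v‖
        have h1 : ‖am - v‖ ≤ ((p : ℝ)⁻¹) ^ m * ‖v‖ := by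
          have := gk_contract d hd c hn hFn m hφ0 hφu0
          rw [← ham, ← hveq2, zero_sub, norm_neg, hnormuv] at this
          exact this
        have hvpos : (0 : ℝ) < ‖v‖ := norm_pos_iff.mpr hvne
        have hqm : ((p : ℝ)⁻¹) ^ m < 1 := pow_lt_one₀ hpinv0 hpinv1 (by omega)
        have h1' : ‖am - v‖ < ‖v‖ := lt_of_le_of_lt h1 (by nlinarith)
        have hnormam : ‖am‖ = ‖v‖ := by
          have hle1 : ‖am‖ ≤ ‖v‖ := by
            have : ‖v + (am - v)‖ ≤ max ‖v‖ ‖am - v‖ := PadicInt.nonarchimedean _ _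
            rw [add_sub_cancel] at this
            exact le_trans this (max_le le_rfl h1'.le)
          have hle2 : ‖v‖ ≤ ‖am‖ := by
            have h3 : ‖am + (v - am)‖ ≤ max ‖am‖ ‖v - am‖ := PadicInt.nonarchimedean _ _
            rw [add_sub_cancel] at h3
            rcases max_cases ‖am‖ ‖v - am‖ with ⟨he, _⟩ | ⟨he, _⟩
            · rwa [he] at h3
            · rw [he, norm_sub_rev] at h3
              exact absurd (lt_of_le_of_lt h3 h1') (lt_irrefl _)
          exact le_antisymm hle1 hle2
        -- step 2 : ‖v‖ ≤ ‖u - v‖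
        have h2 : ‖v‖ ≤ ‖u - v‖ := key_ineq hd hpd hne_uv hpow hvne hnormuv
        -- step 3 : ‖u - v‖ ≤ p⁻ᵏ ‖v‖
        have h3 : ‖u - v‖ ≤ ((p : ℝ)⁻¹) ^ k * ‖v‖ := by
          have := gk_contract d hd c hn hFn k hφ0 hφam
          rw [← hueq, ← hveq, zero_sub, norm_neg, hnormam] at this
          exact this
        rcases Nat.eq_zero_or_pos k with hk0 | hk0
        · -- k = 0 : u = 0, so v = 0, contradiction
          apply hvne
          have hu0 : u = 0 := by rw [hueq, hk0, Nat.zero_mul, Function.iterate_zero_apply]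
          have : v ^ d = 0 := by rw [← hpow, hu0, zero_pow (by omega)]
          exact pow_eq_zero_iff (by omega) |>.mp this
        · have hqk : ((p : ℝ)⁻¹) ^ k ≤ (p : ℝ)⁻¹ := by
            calc ((p : ℝ)⁻¹) ^ k ≤ ((p : ℝ)⁻¹) ^ 1 :=
                  pow_le_pow_of_le_one hpinv0 hpinv1.le (by omega)
              _ = (p : ℝ)⁻¹ := pow_one _
          nlinarith
      · -- the common residue is a unit : u = v, contradiction
        apply hne_uv
        set w := F^[i'] 0 with hwdef
        set S : ℤ_[p] := ∑ i ∈ Finset.range d, u ^ i * v ^ (d - 1 - i) with hS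
        have hS0 : S = 0 ∨ u - v = 0 := by
          rw [← mul_eq_zero, geom_sum₂_mul, hpow, sub_self]
        rcases hS0 with hS0 | hS0
        · exfalso
          have hφS : PadicInt.toZMod S = (d : ZMod p) * w ^ (d - 1) := by
            rw [hS, map_sum]
            have : ∀ i ∈ Finset.range d,
                PadicInt.toZMod (u ^ i * v ^ (d - 1 - i)) = w ^ (d - 1) := by
              intro i hi
              rw [map_mul, map_pow, map_pow, hφu, hφv, ← pow_add]
              congr 1
              have := Finset.mem_range.mp hi
              omega
            rw [Finset.sum_congr rfl this, Finset.sum_const, Finset.card_range, nsmul_eq_mul]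
          have hdne : (d : ZMod p) ≠ 0 := by
            intro h
            rw [ZMod.natCast_eq_zero_iff] at h
            have := Nat.le_of_dvd (by omega) h
            omega
          have hwne : w ^ (d - 1) ≠ 0 := pow_ne_zero _ hw
          have : PadicInt.toZMod S ≠ 0 := by
            rw [hφS]
            exact mul_ne_zero hdne hwne
          rw [hS0, map_zero] at this
          exact this rfl
        · exact sub_eq_zero.mp hS0
  constructor
  · by_cases hinf : (Set.range fun k : ℕ => fZ^[k] 0).Infinite
    · exact Or.inr hinf
    · exact Or.inl (main hinf)
  · rintro ⟨hfin, hall⟩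
    exact hall n hn (main hfin).1
end

section
/- Fix d ≥ 2 and n ≥ 1. Let p be a prime and c₀ ∈ ℤ_p be such that p is a primitive prime divisor of f_{c₀}^n(0), where f_c(x) = x^d + c. Let g(c) = f_c^n(0) viewed as a polynomial in c. If ν_p(g(c₀)) > 2 ν_p(g'(c₀)), then there exists a unique c̄ ∈ ℤ_p with ν_p(c̄ − c₀) > ν_p(g'(c₀)) such that 0 is a periodic point of exact period n for f_{c̄} over ℤ_p; moreover ν_p(c̄ − c₀) = ν_p(g(c₀)) − ν_p(g'(c₀)). -/
private lemma pd_norm_lt_iff {p : ℕ} [Fact p.Prime] {x y : ℤ_[p]} (hx : x ≠ 0) (hy : y ≠ 0) :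
    ‖x‖ < ‖y‖ ↔ y.valuation < x.valuation := by
  have hp : 1 < (p : ℝ) := by exact_mod_cast (Fact.out : p.Prime).one_lt
  rw [PadicInt.norm_eq_zpow_neg_valuation hx, PadicInt.norm_eq_zpow_neg_valuation hy,
    zpow_lt_zpow_iff_right₀ hp, neg_lt_neg_iff, Nat.cast_lt]

private lemma pd_val_eq_of_norm_eq {p : ℕ} [Fact p.Prime] {x y : ℤ_[p]} (hx : x ≠ 0)
    (hy : y ≠ 0) (h : ‖x‖ = ‖y‖) : x.valuation = y.valuation := by
  have hp0 : (0 : ℝ) < (p : ℝ) := by exact_mod_cast (Fact.out : p.Prime).pos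
  have hp1 : (p : ℝ) ≠ 1 := by exact_mod_cast (Fact.out : p.Prime).ne_one
  have h2 : (p : ℝ) ^ (-(x.valuation : ℤ)) = (p : ℝ) ^ (-(y.valuation : ℤ)) := by
    rw [← PadicInt.norm_eq_zpow_neg_valuation hx, ← PadicInt.norm_eq_zpow_neg_valuation hy]; exact h
  have := zpow_right_injective₀ hp0 hp1 h2
  omega

private lemma pd_val_mul {p : ℕ} [Fact p.Prime] {x y : ℤ_[p]} (hx : x ≠ 0) (hy : y ≠ 0) :
    (x * y).valuation = x.valuation + y.valuation := by
  exact PadicInt.valuation_mul hx hy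

private lemma pd_val_neg {p : ℕ} [Fact p.Prime] {x : ℤ_[p]} (hx : x ≠ 0) :
    (-x).valuation = x.valuation :=
  pd_val_eq_of_norm_eq (neg_ne_zero.2 hx) hx (norm_neg x)

private lemma pd_val_add {p : ℕ} [Fact p.Prime] {x y : ℤ_[p]} (hx : x ≠ 0)
    (h : x.valuation < y.valuation) : (x + y).valuation = x.valuation := by
  by_cases hy : y = 0
  · simp [hy]
  have hynx : ‖y‖ < ‖x‖ := (pd_norm_lt_iff hy hx).2 h
  have h1 : ‖x + y‖ ≤ ‖x‖ := (PadicInt.nonarchimedean x y).trans (by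
    rw [max_eq_left hynx.le])
  have h2 : ‖x‖ ≤ max ‖x + y‖ ‖y‖ := by
    have : x = (x + y) + (-y) := by ring
    calc ‖x‖ = ‖(x + y) + (-y)‖ := by rw [← this]
    _ ≤ max ‖x + y‖ ‖-y‖ := PadicInt.nonarchimedean _ _
    _ = max ‖x + y‖ ‖y‖ := by rw [norm_neg]
  have hne : ‖x + y‖ = ‖x‖ := by
    rcases max_cases ‖x + y‖ ‖y‖ with ⟨he, _⟩ | ⟨he, _⟩
    · exact le_antisymm h1 (h2.trans_eq he)
    · exact absurd ((h2.trans_eq he).trans_lt hynx) (lt_irrefl _)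
  have hxy0 : x + y ≠ 0 := by
    intro h0; rw [h0, norm_zero] at hne; exact hx (norm_eq_zero.mp hne.symm)
  exact pd_val_eq_of_norm_eq hxy0 hx hne

private lemma pd_eval_iter {p : ℕ} [Fact p.Prime] (d : ℕ) (P : ℕ → Polynomial ℤ_[p])
    (hP0 : P 0 = 0) (hPs : ∀ k, P (k + 1) = (P k) ^ d + Polynomial.X) :
    ∀ (k : ℕ) (c : ℤ_[p]), (P k).eval c = (fun x : ℤ_[p] => x ^ d + c)^[k] 0 := by
  intro k
  induction k with
  | zero => intro c; simp [hP0]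
  | succ m ih =>
    intro c
    rw [hPs m, Function.iterate_succ_apply']
    simp [ih c]

theorem stmt7 (p : ℕ) [Fact p.Prime] (d n : ℕ) (hd : 2 ≤ d) (hn : 1 ≤ n)
    (c₀ : ℤ_[p]) (P : ℕ → Polynomial ℤ_[p])
    (hP0 : P 0 = 0) (hPs : ∀ k, P (k + 1) = (P k) ^ d + Polynomial.X)
    (hprim : (P n).eval c₀ ≠ 0 ∧ 0 < ((P n).eval c₀).valuation ∧
      ∀ k, 1 ≤ k → k < n → IsUnit ((P k).eval c₀))
    (hder : (Polynomial.derivative (P n)).eval c₀ ≠ 0)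
    (hhen : 2 * ((Polynomial.derivative (P n)).eval c₀).valuation <
      ((P n).eval c₀).valuation) :
    ∃! cb : ℤ_[p],
      ((Polynomial.derivative (P n)).eval c₀).valuation < (cb - c₀).valuation ∧
      ((fun x : ℤ_[p] => x ^ d + cb)^[n] 0 = 0 ∧
        ∀ k, 0 < k → k < n → (fun x : ℤ_[p] => x ^ d + cb)^[k] 0 ≠ 0) ∧
      (cb - c₀).valuation =
        ((P n).eval c₀).valuation -
          ((Polynomial.derivative (P n)).eval c₀).valuation := by
  obtain ⟨hF0, hFpos, hunits⟩ := hprim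
  set F := P n with hF
  set a := (Polynomial.derivative F).eval c₀ with ha
  have hp : 1 < (p : ℝ) := by exact_mod_cast (Fact.out : p.Prime).one_lt
  -- Hensel hypothesis in norm form
  have hnorm : ‖F.eval c₀‖ < ‖a‖ ^ 2 := by
    rw [PadicInt.norm_eq_zpow_neg_valuation hF0, PadicInt.norm_eq_zpow_neg_valuation hder, ← zpow_natCast _ 2,
      ← zpow_mul, zpow_lt_zpow_iff_right₀ hp]
    push_cast
    omega
  obtain ⟨z, hz0, hz1, _, huniq⟩ := hensels_lemma hnorm
  simp only [Polynomial.coe_aeval_eq_eval] at hz0 hz1 huniq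
  have hzc : z - c₀ ≠ 0 := by
    intro h
    apply hF0
    rw [sub_eq_zero] at h
    rw [← h]; exact hz0
  have hvz : a.valuation < (z - c₀).valuation := (pd_norm_lt_iff hzc hder).1 hz1
  -- valuation of z - c₀
  obtain ⟨k, hk⟩ := F.binomExpansion c₀ (z - c₀)
  rw [add_sub_cancel, hz0] at hk
  have key : F.eval c₀ = -((a + k * (z - c₀)) * (z - c₀)) := by
    rw [← ha] at hk; linear_combination -hk
  have hu : (a + k * (z - c₀)).valuation = a.valuation := by
    by_cases hk0 : k = 0
    · simp [hk0]
    · exact pd_val_add hder (by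
        rw [pd_val_mul hk0 hzc]
        have := Nat.zero_le k.valuation
        omega)
  have hu0 : a + k * (z - c₀) ≠ 0 := by
    intro h0
    apply hF0
    rw [key, h0, zero_mul, neg_zero]
  have hvzval : (z - c₀).valuation = (F.eval c₀).valuation - a.valuation := by
    rw [key, pd_val_neg (mul_ne_zero hu0 hzc), pd_val_mul hu0 hzc, hu]
    omega
  -- z - c₀ has positive valuation, norm < 1
  have hvzpos : 0 < (z - c₀).valuation := lt_of_le_of_lt (Nat.zero_le a.valuation) hvz
  have hznorm1 : ‖z - c₀‖ < 1 := by
    rw [PadicInt.norm_eq_zpow_neg_valuation hzc, ← zpow_zero (p : ℝ), zpow_lt_zpow_iff_right₀ hp]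
    omega
  -- units stay units
  have hstay : ∀ k, 1 ≤ k → k < n → (P k).eval z ≠ 0 := by
    intro m hm1 hmn
    have hud : ‖(P m).eval c₀‖ = 1 := PadicInt.isUnit_iff.1 (hunits m hm1 hmn)
    have hdvd : (z - c₀) ∣ (P m).eval z - (P m).eval c₀ := Polynomial.sub_dvd_eval_sub z c₀ (P m)
    obtain ⟨w, hw⟩ := hdvd
    have hwnorm : ‖(P m).eval z - (P m).eval c₀‖ < 1 := by
      rw [hw]
      calc ‖(z - c₀) * w‖ = ‖z - c₀‖ * ‖w‖ := norm_mul _ _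
      _ ≤ ‖z - c₀‖ * 1 := by
          exact mul_le_mul_of_nonneg_left (PadicInt.norm_le_one w) (norm_nonneg _)
      _ = ‖z - c₀‖ := mul_one _
      _ < 1 := hznorm1
    have : ‖(P m).eval z‖ = 1 := by
      have he : (P m).eval z = (P m).eval c₀ + ((P m).eval z - (P m).eval c₀) := by ring
      rw [he]
      have h1 : ‖(P m).eval c₀ + ((P m).eval z - (P m).eval c₀)‖ ≤ 1 :=
        (PadicInt.nonarchimedean _ _).trans (by rw [hud]; exact max_le le_rfl hwnorm.le)
      have h2 : (1 : ℝ) ≤ max ‖(P m).eval c₀ + ((P m).eval z - (P m).eval c₀)‖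
          ‖(P m).eval z - (P m).eval c₀‖ := by
        rw [← hud]
        have : (P m).eval c₀ = ((P m).eval c₀ + ((P m).eval z - (P m).eval c₀)) +
            (-((P m).eval z - (P m).eval c₀)) := by ring
        calc ‖(P m).eval c₀‖ = ‖_ + (-((P m).eval z - (P m).eval c₀))‖ := by rw [← this]
        _ ≤ max _ ‖-((P m).eval z - (P m).eval c₀)‖ := PadicInt.nonarchimedean _ _
        _ = _ := by rw [norm_neg]
      rcases max_cases ‖(P m).eval c₀ + ((P m).eval z - (P m).eval c₀)‖
          ‖(P m).eval z - (P m).eval c₀‖ with ⟨he2, _⟩ | ⟨he2, _⟩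
      · exact le_antisymm h1 (h2.trans_eq he2)
      · exact absurd ((h2.trans_eq he2).trans_lt hwnorm) (by norm_num)
    intro h0
    rw [h0, norm_zero] at this
    norm_num at this
  have hiter := pd_eval_iter d P hP0 hPs
  refine ⟨z, ⟨hvz, ⟨?_, ?_⟩, hvzval⟩, ?_⟩
  · rw [← hiter n z]; exact hz0
  · intro m hm1 hmn h0
    exact hstay m hm1 hmn (by rw [hiter m z]; exact h0)
  · rintro cb' ⟨hv', ⟨hper', _⟩, _⟩
    have heval' : F.eval cb' = 0 := by rw [hF, hiter n cb']; exact hper'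
    have hcb'ne : cb' - c₀ ≠ 0 := by
      intro h
      apply hF0
      rw [sub_eq_zero] at h
      rw [← h]; exact heval'
    exact huniq cb' heval' ((pd_norm_lt_iff hcb'ne hder).2 hv')
end

section
/- There exists c̄ ∈ ℤ_5 with c̄ ≡ 16 (mod 125) such that 0 is a periodic point of exact period 3 for the map f(x) = x² + c̄ on ℤ_5, i.e., f³(0) = 0 and f(0) ≠ 0 ≠ f²(0). -/
instance : Fact (Nat.Prime 5) := ⟨by norm_num⟩

theorem stmt8 : ∃ cb : ℤ_[5],
    (5 : ℤ_[5]) ^ 3 ∣ (cb - 16) ∧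
    ((cb ^ 2 + cb) ^ 2 + cb = 0) ∧ cb ≠ 0 ∧ cb ^ 2 + cb ≠ 0 := by
  set F : Polynomial ℤ_[5] :=
    Polynomial.X ^ 4 + 2 * Polynomial.X ^ 3 + Polynomial.X ^ 2 + Polynomial.X with hF
  have heval : F.eval 16 = 74000 := by
    simp [hF]; norm_num
  have hderiv : F.derivative.eval 16 = 17953 := by
    simp [hF, Polynomial.derivative_X_pow]; norm_num
  have h74 : ‖(74000 : ℤ_[5])‖ < 1 := by
    have : ((74000 : ℤ) : ℤ_[5]) = 74000 := by push_cast; ring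
    rw [← this, PadicInt.norm_int_lt_one_iff_dvd]; norm_num
  have h17953 : ‖(17953 : ℤ_[5])‖ = 1 := by
    have h2 : ((17953 : ℤ) : ℤ_[5]) = 17953 := by push_cast; ring
    have := (PadicInt.norm_int_lt_one_iff_dvd (p := 5) 17953).not
    rw [h2] at this
    have hle := PadicInt.norm_le_one (17953 : ℤ_[5])
    have : ¬ ‖(17953 : ℤ_[5])‖ < 1 := by
      apply this.mpr; norm_num
    linarith [lt_or_eq_of_le hle |>.resolve_left this]
  have hnorm : ‖F.eval 16‖ < ‖F.derivative.eval 16‖ ^ 2 := by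
    rw [heval, hderiv, h17953]; simpa using h74
  obtain ⟨z, hz0, hzdist, -, -⟩ := hensels_lemma hnorm
  have hFz : (z ^ 2 + z) ^ 2 + z = 0 := by
    have : F.eval z = 0 := hz0
    simp [hF] at this
    linear_combination this
  rw [Polynomial.coe_aeval_eq_eval, hderiv, h17953] at hzdist
  -- 5 ∣ z - 16
  have hcast : ((5 : ℕ) : ℤ_[5]) = 5 := by norm_num
  have hdvd5 : (5 : ℤ_[5]) ∣ (z - 16) := by
    rw [← hcast]; exact (PadicInt.norm_lt_one_iff_dvd _).mp hzdist
  -- u is a unit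
  set u : ℤ_[5] := z ^ 3 + 18 * z ^ 2 + 289 * z + 4625 with hu
  have hkey : (z - 16) * u = -74000 := by
    rw [hu]; linear_combination hFz
  have huunit : IsUnit u := by
    by_contra h
    rw [PadicInt.not_isUnit_iff, PadicInt.norm_lt_one_iff_dvd, hcast] at h
    have h1 : (5 : ℤ_[5]) ∣ (u - 17953) := by
      obtain ⟨w, hw⟩ := hdvd5
      exact ⟨w * (z ^ 2 + 34 * z + 833), by rw [hu]; linear_combination (z ^ 2 + 34 * z + 833) * hw⟩
    have h2 : (5 : ℤ_[5]) ∣ (17953 : ℤ_[5]) := by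
      have := dvd_sub h h1
      simpa using this
    have : ‖(17953 : ℤ_[5])‖ < 1 := by
      rw [PadicInt.norm_lt_one_iff_dvd, hcast]; exact h2
    rw [h17953] at this; exact lt_irrefl 1 this
  obtain ⟨v, hv⟩ := isUnit_iff_exists_inv.mp huunit
  have hzne : z ≠ 0 := by
    intro h0
    rw [h0] at hzdist
    have : ‖(16 : ℤ_[5])‖ = 1 := by
      have h2 : ((16 : ℤ) : ℤ_[5]) = 16 := by push_cast; ring
      have h3 := (PadicInt.norm_int_lt_one_iff_dvd (p := 5) 16).not
      rw [h2] at h3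
      have hle := PadicInt.norm_le_one (16 : ℤ_[5])
      have h4 : ¬ ‖(16 : ℤ_[5])‖ < 1 := h3.mpr (by norm_num)
      linarith [lt_or_eq_of_le hle |>.resolve_left h4]
    simp only [zero_sub, norm_neg] at hzdist
    linarith [hzdist, this.ge]
  refine ⟨z, ⟨-592 * v, ?_⟩, hFz, hzne, ?_⟩
  · have : (z - 16) * (u * v) = -74000 * v := by rw [← mul_assoc, hkey]
    rw [hv, mul_one] at this
    rw [this]; ring
  · intro h0
    exact hzne (by linear_combination hFz - (z ^ 2 + z) * h0)
end

section
/- Fix d ≥ 2, n ≥ 1, and a prime p. Let c₀ ∈ ℤ be such that p is a primitive prime divisor of f_{c₀}^n(0), where f_c(x) = x^d + c. If p ∤ disc_c(G_{d,n}(c)), then the c-derivative of the polynomial g(c) = f_c^n(0) satisfies ν_p(g'(c₀)) = 0. -/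
open Polynomial Finset

lemma list_prod_getD {M α : Type*} [CommMonoid M] (L : List α) (f : α → M) (d : α) :
    (L.map f).prod = ∏ i ∈ Finset.range L.length, f (L.getD i d) := by
  induction L with
  | nil => simp
  | cons a t ih =>
      rw [List.map_cons, List.prod_cons, List.length_cons, Finset.prod_range_succ']
      simp [ih, mul_comm]

lemma derivative_finset_prod {R ι : Type*} [CommRing R] [DecidableEq ι]
    (s : Finset ι) (f : ι → Polynomial R) :
    Polynomial.derivative (∏ i ∈ s, f i) =
      ∑ i ∈ s, (∏ j ∈ s.erase i, f j) * Polynomial.derivative (f i) := by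
  induction s using Finset.induction_on with
  | empty => simp
  | @insert a s ha ih =>
      rw [Finset.prod_insert ha, Polynomial.derivative_mul, Finset.sum_insert ha,
        Finset.erase_insert ha, ih, Finset.mul_sum]
      congr 1
      · rw [mul_comm]
      apply Finset.sum_congr rfl
      intro i hi
      have hia : i ≠ a := by rintro rfl; exact ha hi
      rw [Finset.erase_insert_of_ne hia.symm,
        Finset.prod_insert (fun h => ha (Finset.mem_of_mem_erase h)), mul_assoc]

lemma P_monic (d : ℕ) (hd : 2 ≤ d) (P : ℕ → Polynomial ℤ) (hP0 : P 0 = 0)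
    (hPs : ∀ k, P (k + 1) = (P k) ^ d + Polynomial.X) :
    ∀ t, 1 ≤ t → (P t).Monic ∧ 1 ≤ (P t).natDegree := by
  intro t ht
  induction t with
  | zero => omega
  | succ k ih =>
      rcases Nat.eq_or_lt_of_le ht with h1 | h1
      · have : k = 0 := by omega
        subst this
        rw [hPs, hP0, zero_pow (by omega : d ≠ 0), zero_add]
        exact ⟨monic_X, by simp⟩
      · have hk : 1 ≤ k := by omega
        obtain ⟨hm, hdeg⟩ := ih hk
        have hmp : ((P k) ^ d).Monic := hm.pow d
        have hnd : ((P k) ^ d).natDegree = d * (P k).natDegree := hm.natDegree_pow d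
        have hdlt : degree (Polynomial.X : Polynomial ℤ) < degree ((P k) ^ d) := by
          rw [degree_X, degree_eq_natDegree hmp.ne_zero, hnd]
          exact_mod_cast (by nlinarith : 1 < d * (P k).natDegree)
        constructor
        · rw [hPs]; exact hmp.add_of_left hdlt
        · rw [hPs]
          have : ((P k) ^ d + Polynomial.X).natDegree = ((P k)^d).natDegree := by
            rw [natDegree_add_eq_left_of_degree_lt hdlt]
          rw [this, hnd]; nlinarith

lemma G_eq (d n : ℕ) (hd : 2 ≤ d) (hn : 1 ≤ n)
    (P : ℕ → Polynomial ℤ) (hP0 : P 0 = 0)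
    (hPs : ∀ k, P (k + 1) = (P k) ^ d + Polynomial.X)
    (G : Polynomial ℤ)
    (hG : algebraMap (Polynomial ℤ) (FractionRing (Polynomial ℤ)) G =
      ∏ t ∈ n.divisors,
        (algebraMap (Polynomial ℤ) (FractionRing (Polynomial ℤ)) (P t)) ^
          (ArithmeticFunction.moebius (n / t))) :
    G * ∏ t ∈ n.divisors.filter (fun t => ArithmeticFunction.moebius (n / t) = -1), P t
      = ∏ t ∈ n.divisors.filter (fun t => ArithmeticFunction.moebius (n / t) = 1), P t := by
  classical
  set K := FractionRing (Polynomial ℤ)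
  set φ := algebraMap (Polynomial ℤ) K with hφ
  have hinj : Function.Injective φ := IsFractionRing.injective (Polynomial ℤ) K
  have hPne : ∀ t ∈ n.divisors, φ (P t) ≠ 0 := by
    intro t htd
    have ht1 : 1 ≤ t := Nat.pos_of_mem_divisors htd
    have := (P_monic d hd P hP0 hPs t ht1).1.ne_zero
    simpa [map_eq_zero_iff φ hinj] using this
  set S := n.divisors.filter (fun t => ArithmeticFunction.moebius (n / t) = 1) with hS
  set T := n.divisors.filter (fun t => ArithmeticFunction.moebius (n / t) = -1) with hT
  -- split the product
  have hsplit : ∏ t ∈ n.divisors, (φ (P t)) ^ (ArithmeticFunction.moebius (n / t))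
      = (∏ t ∈ S, φ (P t)) * (∏ t ∈ T, φ (P t))⁻¹ := by
    rw [← Finset.prod_filter_mul_prod_filter_not n.divisors
      (fun t => ArithmeticFunction.moebius (n / t) = 1)]
    congr 1
    · rw [hS]; exact Finset.prod_congr rfl (fun t ht => by
        rw [(Finset.mem_filter.mp ht).2]; simp)
    · rw [← Finset.prod_filter_mul_prod_filter_not
        (n.divisors.filter (fun t => ¬ ArithmeticFunction.moebius (n / t) = 1))
        (fun t => ArithmeticFunction.moebius (n / t) = -1), Finset.filter_filter]
      have h1 : (n.divisors.filter fun t =>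
          (¬ ArithmeticFunction.moebius (n / t) = 1) ∧ ArithmeticFunction.moebius (n / t) = -1)
          = T := by
        rw [hT]; apply Finset.filter_congr; intro t _
        constructor
        · rintro ⟨_, h⟩; exact h
        · intro h; exact ⟨by rw [h]; decide, h⟩
      rw [h1]
      have h2 : ∏ t ∈ (n.divisors.filter fun t => ¬ ArithmeticFunction.moebius (n / t) = 1).filter
          (fun t => ¬ ArithmeticFunction.moebius (n / t) = -1),
          (φ (P t)) ^ (ArithmeticFunction.moebius (n / t)) = 1 := by
        apply Finset.prod_eq_one
        intro t ht
        simp only [Finset.mem_filter] at ht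
        have : ArithmeticFunction.moebius (n / t) = 0 := by
          by_contra h0
          rcases ArithmeticFunction.moebius_ne_zero_iff_eq_or.mp h0 with h | h
          · exact ht.1.2 h
          · exact ht.2 h
        rw [this]; simp
      rw [h2, mul_one]
      refine (Finset.prod_congr rfl (fun t ht => ?_)).trans
        (Finset.prod_inv_distrib _)
      rw [(Finset.mem_filter.mp ht).2]
      simp [zpow_neg]
  have hTne : (∏ t ∈ T, φ (P t)) ≠ 0 :=
    Finset.prod_ne_zero_iff.mpr (fun t ht => hPne t (Finset.mem_filter.mp ht).1)
  apply hinj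
  rw [map_mul, map_prod, hG, hsplit, map_prod]
  exact inv_mul_cancel_right₀ hTne _


/-- The discriminant of an integer polynomial, computed as a complex number from
its complex roots: `lc ^ (2 deg - 2) * ∏_{i < j} (rᵢ - rⱼ)²`. -/
noncomputable def discC (G : Polynomial ℤ) : ℂ :=
  let L := ((G.map (Int.castRingHom ℂ)).roots).toList
  ((G.leadingCoeff : ℤ) : ℂ) ^ (2 * G.natDegree - 2) *
    ∏ i ∈ Finset.range L.length, ∏ j ∈ Finset.Ioo i L.length,
      (L.getD i 0 - L.getD j 0) ^ 2

set_option synthInstance.maxHeartbeats 1000000 in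
set_option maxHeartbeats 1000000 in
lemma disc_part (p : ℕ) (hp : p.Prime) (c₀ : ℤ) (G : Polynomial ℤ)
    (hGm : G.Monic) (hGc : (p : ℤ) ∣ G.eval c₀)
    (hG'c : (p : ℤ) ∣ (Polynomial.derivative G).eval c₀)
    (D : ℤ) (hD : (D : ℂ) = discC G) : (p : ℤ) ∣ D := by
  classical
  set GC := G.map (Int.castRingHom ℂ) with hGCdef
  have hGCm : GC.Monic := hGm.map _
  set L := GC.roots.toList with hLdef
  set m := L.length with hmdef
  -- factorization of GC
  have hfact : GC = ∏ i ∈ Finset.range m, (X - C (L.getD i 0)) := by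
    conv_lhs => rw [(IsAlgClosed.splits GC).eq_prod_roots_of_monic hGCm]
    rw [← Multiset.coe_toList GC.roots, ← hLdef, Multiset.map_coe, Multiset.prod_coe]
    exact list_prod_getD L _ 0
  -- roots are integral over ℤ
  have hint : ∀ i, IsIntegral ℤ (L.getD i (0 : ℂ)) := by
    intro i
    by_cases h : i < m
    · have hmem : L.getD i 0 ∈ GC.roots := by
        rw [List.getD_eq_getElem L 0 h]
        exact Multiset.mem_toList.mp (List.getElem_mem _)
      refine ⟨G, hGm, ?_⟩
      rw [Polynomial.eval₂_eq_eval_map]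
      exact Polynomial.isRoot_of_mem_roots hmem
    · rw [List.getD_eq_default _ _ (le_of_not_gt h)]; exact isIntegral_zero
  -- ℂ-level identities
  have hevC : ∀ q : Polynomial ℤ, ((q.eval c₀ : ℤ) : ℂ) =
      (q.map (Int.castRingHom ℂ)).eval ((c₀ : ℤ) : ℂ) := by
    intro q
    rw [Polynomial.eval_map]
    have := Polynomial.eval₂_at_apply (Int.castRingHom ℂ) c₀ (p := q)
    simpa using this.symm
  have hE1C : ((G.eval c₀ : ℤ) : ℂ) = ∏ i ∈ Finset.range m, (((c₀ : ℤ) : ℂ) - L.getD i 0) := by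
    rw [hevC, ← hGCdef, hfact, Polynomial.eval_prod]
    simp
  have hE2C : (((Polynomial.derivative G).eval c₀ : ℤ) : ℂ) =
      ∑ i ∈ Finset.range m, ∏ j ∈ (Finset.range m).erase i, (((c₀ : ℤ) : ℂ) - L.getD j 0) := by
    rw [hevC, ← Polynomial.derivative_map, ← hGCdef, hfact, derivative_finset_prod]
    simp [Polynomial.eval_finset_sum, Polynomial.eval_prod]
  have hE3C : ((D : ℤ) : ℂ) =
      ∏ i ∈ Finset.range m, ∏ j ∈ Finset.Ioo i m, (L.getD i 0 - L.getD j 0) ^ 2 := by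
    rw [hD]
    show discC G = _
    rw [discC]
    simp only [← hGCdef, ← hLdef, ← hmdef, hGm.leadingCoeff]
    push_cast
    rw [one_pow, one_mul]
  -- move to the integral closure R of ℤ in ℂ
  set R := integralClosure ℤ ℂ with hRdef
  have hιinj : Function.Injective (algebraMap R ℂ) := Subtype.coe_injective
  set ρ : ℕ → R := fun i => ⟨L.getD i 0, hint i⟩ with hρdef
  set c : R := algebraMap ℤ R c₀ with hcdef
  have hcoe : ∀ z : ℤ, algebraMap R ℂ (algebraMap ℤ R z) = (z : ℂ) := by
    intro z; simp
  have hE1R : algebraMap ℤ R (G.eval c₀) = ∏ i ∈ Finset.range m, (c - ρ i) := by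
    apply Subtype.ext
    push_cast [hρdef, hcdef]
    simpa using hE1C
  have hE2R : algebraMap ℤ R ((Polynomial.derivative G).eval c₀) =
      ∑ i ∈ Finset.range m, ∏ j ∈ (Finset.range m).erase i, (c - ρ j) := by
    apply Subtype.ext
    push_cast [hρdef, hcdef]
    simpa using hE2C
  have hE3R : algebraMap ℤ R D =
      ∏ i ∈ Finset.range m, ∏ j ∈ Finset.Ioo i m, (ρ i - ρ j) ^ 2 := by
    apply Subtype.ext
    push_cast [hρdef]
    simpa using hE3C
  -- choose a prime of R above p
  have hpZ : Prime (p : ℤ) := Nat.prime_iff_prime_int.mp hp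
  have hspan : (Ideal.span {(p : ℤ)}).IsPrime :=
    (Ideal.span_singleton_prime (by exact_mod_cast hp.ne_zero)).mpr hpZ
  have halginj : Function.Injective (algebraMap ℤ R) := by
    have h2 : Function.Injective (algebraMap ℤ ℂ) := by
      rw [algebraMap_int_eq]
      exact fun a b h => Int.cast_injective h
    have h3 : (algebraMap R ℂ).comp (algebraMap ℤ R) = algebraMap ℤ ℂ :=
      (IsScalarTower.algebraMap_eq ℤ R ℂ).symm
    intro a b hab
    apply h2
    rw [← h3, RingHom.comp_apply, RingHom.comp_apply, hab]
  have hker : RingHom.ker (algebraMap ℤ R) ≤ Ideal.span {(p : ℤ)} := by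
    rw [(RingHom.injective_iff_ker_eq_bot _).mp halginj]
    exact bot_le
  obtain ⟨𝔭, h𝔭p, h𝔭c⟩ :=
    Ideal.exists_ideal_over_prime_of_isIntegral_of_isDomain
      (R := ℤ) (S := R) (Ideal.span {(p : ℤ)}) hker
  have hmem : ∀ z : ℤ, algebraMap ℤ R z ∈ 𝔭 ↔ (p : ℤ) ∣ z := by
    intro z
    rw [← Ideal.mem_comap, h𝔭c, Ideal.mem_span_singleton]
  -- find two congruent roots mod 𝔭
  have h1 : ∏ i ∈ Finset.range m, (c - ρ i) ∈ 𝔭 := by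
    rw [← hE1R]; exact (hmem _).mpr hGc
  obtain ⟨i, hi, hiP⟩ := (Ideal.IsPrime.prod_mem_iff (hp := h𝔭p)).mp h1
  have h2 : ∑ k ∈ Finset.range m, ∏ j ∈ (Finset.range m).erase k, (c - ρ j) ∈ 𝔭 := by
    rw [← hE2R]; exact (hmem _).mpr hG'c
  have hdvd_mem : ∀ {x y : R}, x ∈ 𝔭 → x ∣ y → y ∈ 𝔭 := by
    rintro x y hx ⟨u, rfl⟩
    exact Ideal.mul_mem_right _ _ hx
  have h3 : ∏ j ∈ (Finset.range m).erase i, (c - ρ j) ∈ 𝔭 := by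
    have hrest : ∑ k ∈ (Finset.range m).erase i,
        ∏ j ∈ (Finset.range m).erase k, (c - ρ j) ∈ 𝔭 := by
      apply Ideal.sum_mem
      intro k hk
      have hik : i ∈ (Finset.range m).erase k :=
        Finset.mem_erase.mpr ⟨fun h => (Finset.mem_erase.mp hk).1 h.symm, hi⟩
      exact hdvd_mem hiP (Finset.dvd_prod_of_mem _ hik)
    have hsplit := Finset.add_sum_erase (Finset.range m)
      (fun k => ∏ j ∈ (Finset.range m).erase k, (c - ρ j)) hi
    have : ∏ j ∈ (Finset.range m).erase i, (c - ρ j)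
        = (∑ k ∈ Finset.range m, ∏ j ∈ (Finset.range m).erase k, (c - ρ j))
          - ∑ k ∈ (Finset.range m).erase i, ∏ j ∈ (Finset.range m).erase k, (c - ρ j) := by
      rw [← hsplit]; ring
    rw [this]
    exact Ideal.sub_mem _ h2 hrest
  obtain ⟨j, hj, hjP⟩ := (Ideal.IsPrime.prod_mem_iff (hp := h𝔭p)).mp h3
  have hjne : j ≠ i := (Finset.mem_erase.mp hj).1
  have hjr : j ∈ Finset.range m := (Finset.mem_erase.mp hj).2
  have hdiff : ρ i - ρ j ∈ 𝔭 := by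
    have := Ideal.sub_mem _ hjP hiP
    simpa using this
  -- the relevant factor of the discriminant
  set a := min i j with hadef
  set b := max i j with hbdef
  have hfac : (ρ a - ρ b) ^ 2 ∈ 𝔭 := by
    have hab : ρ a - ρ b ∈ 𝔭 := by
      rcases le_or_gt i j with h | h
      · have : a = i ∧ b = j := ⟨min_eq_left h, max_eq_right h⟩
        rw [this.1, this.2]; exact hdiff
      · have : a = j ∧ b = i := ⟨min_eq_right h.le, max_eq_left h.le⟩
        rw [this.1, this.2]
        have := neg_mem hdiff
        simpa using this
    rw [sq]
    exact Ideal.mul_mem_right _ _ hab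
  have hab_lt : a < b := by
    rcases lt_or_gt_of_ne hjne with h | h
    · rw [hadef, hbdef]; omega
    · rw [hadef, hbdef]; omega
  have hbm : b < m := by
    have h1 := Finset.mem_range.mp hi
    have h2 := Finset.mem_range.mp hjr
    rw [hbdef]; omega
  have ham : a ∈ Finset.range m := Finset.mem_range.mpr (lt_trans hab_lt hbm)
  have hbIoo : b ∈ Finset.Ioo a m := Finset.mem_Ioo.mpr ⟨hab_lt, hbm⟩
  have hbig : ∏ i ∈ Finset.range m, ∏ j ∈ Finset.Ioo i m, (ρ i - ρ j) ^ 2 ∈ 𝔭 := by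
    apply hdvd_mem hfac
    exact dvd_trans (Finset.dvd_prod_of_mem (fun l => (ρ a - ρ l) ^ 2) hbIoo)
      (Finset.dvd_prod_of_mem (fun k => ∏ l ∈ Finset.Ioo k m, (ρ k - ρ l) ^ 2) ham)
  rw [← hE3R] at hbig
  exact (hmem D).mp hbig

theorem stmt11 (d n : ℕ) (hd : 2 ≤ d) (hn : 1 ≤ n) (p : ℕ) (hp : p.Prime)
    (c₀ : ℤ) (P : ℕ → Polynomial ℤ) (hP0 : P 0 = 0)
    (hPs : ∀ k, P (k + 1) = (P k) ^ d + Polynomial.X)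
    (G : Polynomial ℤ)
    (hG : algebraMap (Polynomial ℤ) (FractionRing (Polynomial ℤ)) G =
      ∏ t ∈ n.divisors,
        (algebraMap (Polynomial ℤ) (FractionRing (Polynomial ℤ)) (P t)) ^
          (ArithmeticFunction.moebius (n / t)))
    (hprim : (p : ℤ) ∣ (P n).eval c₀ ∧
      ∀ k, 1 ≤ k → k < n → ¬ (p : ℤ) ∣ (P k).eval c₀)
    (hdisc : ∃ D : ℤ, (D : ℂ) = discC G ∧ ¬ (p : ℤ) ∣ D) :
    ¬ (p : ℤ) ∣ (Polynomial.derivative (P n)).eval c₀ := by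
  classical
  intro hcon
  obtain ⟨D, hD, hpD⟩ := hdisc
  have key := G_eq d n hd hn P hP0 hPs G hG
  set S := n.divisors.filter (fun t => ArithmeticFunction.moebius (n / t) = 1) with hS
  set T := n.divisors.filter (fun t => ArithmeticFunction.moebius (n / t) = -1) with hT
  have hn0 : n ≠ 0 := by omega
  have hnS : n ∈ S := by
    rw [hS, Finset.mem_filter]
    exact ⟨Nat.mem_divisors_self n hn0, by
      rw [Nat.div_self (by omega : 0 < n)]; exact ArithmeticFunction.moebius_apply_one⟩
  have hmemlt : ∀ (W : Finset ℕ), W = S ∨ W = T → ∀ t ∈ W, t ≠ n → 1 ≤ t ∧ t < n := by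
    rintro W hW t ht htn
    have htd : t ∈ n.divisors := by
      rcases hW with h | h <;> subst h <;> exact (Finset.mem_filter.mp ht).1
    have h1 : 1 ≤ t := Nat.pos_of_mem_divisors htd
    have h2 : t ≤ n := Nat.le_of_dvd (by omega) (Nat.dvd_of_mem_divisors htd)
    exact ⟨h1, lt_of_le_of_ne h2 htn⟩
  have hTlt : ∀ t ∈ T, 1 ≤ t ∧ t < n := by
    intro t ht
    refine hmemlt T (Or.inr rfl) t ht ?_
    intro he
    have h2 := (Finset.mem_filter.mp ht).2
    rw [he, Nat.div_self (by omega : 0 < n), ArithmeticFunction.moebius_apply_one] at h2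
    norm_num at h2
  have hpZ : Prime (p : ℤ) := Nat.prime_iff_prime_int.mp hp
  -- p does not divide ∏_T eval
  have hpT : ¬ (p : ℤ) ∣ ∏ t ∈ T, (P t).eval c₀ := by
    intro h
    obtain ⟨t, ht, hdvd⟩ := (hpZ.dvd_finset_prod_iff _).mp h
    obtain ⟨h1, h2⟩ := hTlt t ht
    exact hprim.2 t h1 h2 hdvd
  -- p divides G.eval c₀
  have hGc : (p : ℤ) ∣ G.eval c₀ := by
    have hkey : G.eval c₀ * ∏ t ∈ T, (P t).eval c₀ = ∏ t ∈ S, (P t).eval c₀ := by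
      have := congrArg (Polynomial.eval c₀) key
      simpa [Polynomial.eval_prod] using this
    have hpS : (p : ℤ) ∣ ∏ t ∈ S, (P t).eval c₀ := by
      refine Dvd.dvd.trans hprim.1 (Finset.dvd_prod_of_mem _ hnS)
    rw [← hkey] at hpS
    rcases hpZ.dvd_mul.mp hpS with h | h
    · exact h
    · exact absurd h hpT
  -- p divides G'.eval c₀
  have hG'c : (p : ℤ) ∣ (Polynomial.derivative G).eval c₀ := by
    have key' := congrArg (fun q => (Polynomial.derivative q).eval c₀) key
    simp only [Polynomial.derivative_mul, Polynomial.eval_add, Polynomial.eval_mul] at key'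
    -- RHS : derivative of ∏_S
    have hRHS : (p : ℤ) ∣ (Polynomial.derivative (∏ t ∈ S, P t)).eval c₀ := by
      rw [derivative_finset_prod]
      rw [Polynomial.eval_finset_sum]
      apply Finset.dvd_sum
      intro t ht
      rw [Polynomial.eval_mul, Polynomial.eval_prod]
      by_cases htn : t = n
      · subst htn
        exact Dvd.dvd.mul_left hcon _
      · have : n ∈ S.erase t := Finset.mem_erase.mpr ⟨Ne.symm htn, hnS⟩
        exact Dvd.dvd.mul_right
          (Dvd.dvd.trans hprim.1
            (Finset.dvd_prod_of_mem (fun j => Polynomial.eval c₀ (P j)) this)) _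
    rw [← key'] at hRHS
    have h2 : (p : ℤ) ∣ G.eval c₀ * (Polynomial.derivative (∏ t ∈ T, P t)).eval c₀ :=
      Dvd.dvd.mul_right hGc _
    have h3 : (p : ℤ) ∣ (Polynomial.derivative G).eval c₀ * (∏ t ∈ T, P t).eval c₀ :=
      (dvd_add_right h2).mp (by rwa [add_comm] at hRHS)
    rcases hpZ.dvd_mul.mp h3 with h | h
    · exact h
    · exact absurd (by simpa [Polynomial.eval_prod] using h) hpT
  -- G is monic
  have hGm : G.Monic := by
    have hmonT : (∏ t ∈ T, P t).Monic :=
      Polynomial.monic_prod_of_monic _ _ (fun t ht =>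
        (P_monic d hd P hP0 hPs t (hTlt t ht).1).1)
    have hmonS : (∏ t ∈ S, P t).Monic :=
      Polynomial.monic_prod_of_monic _ _ (fun t ht => by
        by_cases htn : t = n
        · rw [htn]; exact (P_monic d hd P hP0 hPs n hn).1
        · exact (P_monic d hd P hP0 hPs t (hmemlt S (Or.inl rfl) t ht htn).1).1)
    have : G.leadingCoeff * (∏ t ∈ T, P t).leadingCoeff = 1 := by
      rw [← Polynomial.leadingCoeff_mul, key]; exact hmonS
    rw [hmonT] at this
    simpa [Polynomial.Monic, mul_one] using this
  exact hpD (disc_part p hp c₀ G hGm hGc hG'c D hD)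
end

section
/- Fix d ≥ 2 and m ≥ 1. Suppose given distinct primes p_1, …, p_m, integers n_1, …, n_m ≥ 1, k_1, …, k_m ≥ 1, and integers c_1, …, c_m such that for each i, p_i is a primitive prime divisor of f_{c_i}^{n_i}(0) and ν_{p_i}(f_{c_i}^{n_i}(0)) = k_i, where f_c(x) = x^d + c. Then there exists a single integer c̄ such that for every i, p_i is a primitive prime divisor of f_{c̄}^{n_i}(0) and ν_{p_i}(f_{c̄}^{n_i}(0)) = k_i. -/
/-- CRT for a finite family of pairwise coprime integer moduli. -/
lemma crt_finset {ι : Type*} [DecidableEq ι] (M c : ι → ℤ)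
    (hco : ∀ i j, i ≠ j → IsCoprime (M i) (M j)) (s : Finset ι) :
    ∃ z : ℤ, ∀ i ∈ s, M i ∣ z - c i := by
  classical
  induction s using Finset.induction_on with
  | empty => exact ⟨0, by simp⟩
  | @insert a s ha ih =>
    obtain ⟨z, hz⟩ := ih
    have hcop : IsCoprime (M a) (∏ j ∈ s, M j) :=
      IsCoprime.prod_right fun j hj => hco a j (by rintro rfl; exact ha hj)
    obtain ⟨u, v, huv⟩ := hcop
    refine ⟨z * u * M a + c a * (v * ∏ j ∈ s, M j), ?_⟩
    intro i hi
    rcases Finset.mem_insert.mp hi with rfl | hi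
    · have h : z * u * M i + c i * (v * ∏ j ∈ s, M j) - c i
        = (z - c i) * u * M i := by linear_combination c i * huv
      rw [h]; exact ⟨(z - c i) * u, by ring⟩
    · have h1 : M i ∣ z - c i := hz i hi
      have hP : M i ∣ ∏ j ∈ s, M j := Finset.dvd_prod_of_mem M hi
      have h2 : z * u * M a + c a * (v * ∏ j ∈ s, M j) - z
          = (c a - z) * v * ∏ j ∈ s, M j := by linear_combination z * huv
      have h2' : M i ∣ z * u * M a + c a * (v * ∏ j ∈ s, M j) - z := by
        rw [h2]; exact Dvd.dvd.mul_left hP _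
      simpa using dvd_add h2' h1

lemma iter_congr (d : ℕ) (a b M : ℤ) (h : a ≡ b [ZMOD M]) (j : ℕ) :
    (fun x : ℤ => x ^ d + a)^[j] 0 ≡ (fun x : ℤ => x ^ d + b)^[j] 0 [ZMOD M] := by
  induction j with
  | zero => rfl
  | succ j ih =>
    rw [Function.iterate_succ_apply', Function.iterate_succ_apply']
    exact (ih.pow d).add h

theorem stmt13 (d m : ℕ) (hd : 2 ≤ d) (hm : 1 ≤ m)
    (p n k : Fin m → ℕ) (c : Fin m → ℤ)
    (hp : ∀ i, (p i).Prime) (hdist : ∀ i j, i ≠ j → p i ≠ p j)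
    (hn : ∀ i, 1 ≤ n i) (hk : ∀ i, 1 ≤ k i)
    (hprim : ∀ i,
      (∀ j, 1 ≤ j → j < n i → ¬ (p i : ℤ) ∣ (fun x : ℤ => x ^ d + c i)^[j] 0) ∧
      (p i : ℤ) ^ (k i) ∣ (fun x : ℤ => x ^ d + c i)^[n i] 0 ∧
      ¬ (p i : ℤ) ^ (k i + 1) ∣ (fun x : ℤ => x ^ d + c i)^[n i] 0) :
    ∃ cb : ℤ, ∀ i,
      (∀ j, 1 ≤ j → j < n i → ¬ (p i : ℤ) ∣ (fun x : ℤ => x ^ d + cb)^[j] 0) ∧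
      (p i : ℤ) ^ (k i) ∣ (fun x : ℤ => x ^ d + cb)^[n i] 0 ∧
      ¬ (p i : ℤ) ^ (k i + 1) ∣ (fun x : ℤ => x ^ d + cb)^[n i] 0 := by
  classical
  set M : Fin m → ℤ := fun i => (p i : ℤ) ^ (k i + 1) with hM
  have hco : ∀ i j, i ≠ j → IsCoprime (M i) (M j) := by
    intro i j hij
    have hbase : IsCoprime ((p i : ℤ)) ((p j : ℤ)) := by
      rw [Int.isCoprime_iff_gcd_eq_one, Int.gcd_natCast_natCast]
      exact (Nat.coprime_primes (hp i) (hp j)).mpr (hdist i j hij)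
    exact (hbase.pow : IsCoprime _ _)
  obtain ⟨cb, hcb⟩ := crt_finset M c hco Finset.univ
  refine ⟨cb, fun i => ?_⟩
  have hmod : cb ≡ c i [ZMOD M i] := Int.ModEq.symm
    ((Int.modEq_iff_dvd).mpr (hcb i (Finset.mem_univ i)))
  have hiter : ∀ j, (fun x : ℤ => x ^ d + cb)^[j] 0 ≡
      (fun x : ℤ => x ^ d + c i)^[j] 0 [ZMOD M i] := iter_congr d cb (c i) (M i) hmod
  have hdvd_iff : ∀ t, t ≤ k i + 1 → ∀ j,
      ((p i : ℤ) ^ t ∣ (fun x : ℤ => x ^ d + cb)^[j] 0 ↔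
       (p i : ℤ) ^ t ∣ (fun x : ℤ => x ^ d + c i)^[j] 0) := by
    intro t ht j
    have h1 : (p i : ℤ) ^ t ∣ M i := pow_dvd_pow _ ht
    have h2 := ((hiter j).of_dvd h1).dvd
    constructor
    · intro h
      have := dvd_add h2 h; simpa using this
    · intro h
      have h2' := ((hiter j).of_dvd h1).symm.dvd
      have := dvd_add h h2'; simpa using this
  obtain ⟨hA, hB, hC⟩ := hprim i
  refine ⟨fun j hj1 hj2 => ?_, ?_, ?_⟩
  · intro h
    exact hA j hj1 hj2 (by
      have := (hdvd_iff 1 (by omega) j).mp (by simpa using h)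
      simpa using this)
  · exact (hdvd_iff (k i) (by omega) (n i)).mpr hB
  · intro h
    exact hC ((hdvd_iff (k i + 1) le_rfl (n i)).mp h)
end

section
/- Fix d ≥ 2 and let c ∈ ℤ be such that there is a prime p with p ∤ d and p exactly dividing c (ν_p(c) = 1). Then the polynomial f(x) = x^d + c is irreducible over ℚ(ζ_d), where ζ_d is a primitive d-th root of unity, and consequently the splitting field F₁ of f over ℚ has Galois group of order φ(d) · d, where φ is the Euler totient function. -/
set_option maxHeartbeats 1000000

open Polynomial NumberField UniqueFactorizationMonoid

lemma aux_irred (d : ℕ) (hd : 2 ≤ d) (c : ℤ) (p : ℕ) (hp : p.Prime)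
    (hpd : ¬ p ∣ d) (hp1 : (p : ℤ) ∣ c) (hp2 : ¬ (p : ℤ) ^ 2 ∣ c) (n : ℕ+) (hn : (n : ℕ) = d) :
    Irreducible ((X : (CyclotomicField n ℚ)[X]) ^ d + C ((c : ℚ) : CyclotomicField n ℚ)) := by
  classical
  set K := CyclotomicField n ℚ
  haveI : IsCyclotomicExtension {(n : ℕ)} ℚ K :=
    haveI : NeZero ((n : ℕ) : ℚ) := ⟨by simp⟩
    CyclotomicField.isCyclotomicExtension _ _
  haveI : NumberField K := IsCyclotomicExtension.numberField {(n : ℕ)} ℚ K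
  set R := 𝓞 K
  have hinj : Function.Injective (algebraMap ℤ R) := fun a b h => by
    have := congrArg (algebraMap R K) h
    rw [← IsScalarTower.algebraMap_apply, ← IsScalarTower.algebraMap_apply] at this
    exact (algebraMap ℤ K).injective_int this
  -- primitive root
  have hζ : IsPrimitiveRoot (IsCyclotomicExtension.zeta n ℚ K) n :=
    IsCyclotomicExtension.zeta_spec n ℚ K
  set ζK : K := IsCyclotomicExtension.zeta n ℚ K
  have hζint : IsIntegral ℤ ζK := hζ.isIntegral n.pos
  set ζ : R := ⟨ζK, hζint⟩ with hζdef
  have hζRint : IsIntegral ℤ ζ := RingOfIntegers.isIntegral ζ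
  have hζmap : algebraMap R K ζ = ζK := rfl
  have hminpoly : minpoly ℤ ζ = cyclotomic n ℤ := by
    rw [← minpoly.algebraMap_eq (IsFractionRing.injective R K) ζ, hζmap]
    exact (Polynomial.cyclotomic_eq_minpoly hζ n.pos).symm
  have hζpow : ζ ^ (n : ℕ) = 1 := by
    ext
    push_cast
    exact hζ.pow_eq_one
  -- the prime ideal
  set I : Ideal ℤ := Ideal.span {(p : ℤ)} with hIdef
  have hIprime : Prime (p : ℤ) := Nat.prime_iff_prime_int.mp hp
  have hImax : I.IsMaximal := PrincipalIdealRing.isMaximal_of_irreducible hIprime.irreducible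
  have hIbot : I ≠ ⊥ := by
    simp [hIdef, Ideal.span_singleton_eq_bot, hp.ne_zero]
  -- conductor coprimality
  have hd_mem : (algebraMap ℤ R) d ∈ conductor ℤ ζ := by
    have hadj : Algebra.adjoin ℚ {(algebraMap R K) ζ} = ⊤ := by
      rw [hζmap]
      exact IsCyclotomicExtension.adjoin_primitive_root_eq_top hζ
    have hcond := conductor_mul_differentIdeal ℤ ℚ K ζ hadj
    have hder : aeval ζ (derivative (minpoly ℤ ζ)) ∈ conductor ℤ ζ := by
      have : Ideal.span {aeval ζ (derivative (minpoly ℤ ζ))} ≤ conductor ℤ ζ :=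
        hcond ▸ Ideal.mul_le_left
      exact this (Ideal.mem_span_singleton_self _)
    -- (d : R) = aeval ζ (derivative Φ) * (aeval ζ g * ζ)
    obtain ⟨g, hg⟩ := Polynomial.cyclotomic.dvd_X_pow_sub_one (n : ℕ) ℤ
    have key : (algebraMap ℤ R) d = aeval ζ (derivative (minpoly ℤ ζ)) * (aeval ζ g * ζ) := by
      have h1 := congrArg (fun q => aeval ζ (derivative q)) hg
      simp only [derivative_sub, derivative_one, derivative_X_pow, sub_zero, derivative_mul,
        map_add, map_mul, map_sub, aeval_C] at h1
      have h0 : aeval ζ (cyclotomic (n : ℕ) ℤ) = 0 := by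
        rw [← hminpoly]; exact minpoly.aeval ℤ ζ
      rw [h0, zero_mul, add_zero] at h1
      have h2 : ((n : ℕ) : R) * ζ ^ ((n : ℕ) - 1) = aeval ζ (derivative (minpoly ℤ ζ)) *
          aeval ζ g := by
        simpa [hminpoly] using h1
      have h3 : ζ ^ ((n : ℕ) - 1) * ζ = 1 := by
        rw [← pow_succ]
        have : (n : ℕ) - 1 + 1 = (n : ℕ) := Nat.succ_pred_eq_of_pos n.pos
        rw [this, hζpow]
      calc (algebraMap ℤ R) d = ((n : ℕ) : R) * (ζ ^ ((n : ℕ) - 1) * ζ) := by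
            rw [h3, mul_one, ← hn]; push_cast; ring
        _ = aeval ζ (derivative (minpoly ℤ ζ)) * aeval ζ g * ζ := by
            rw [← mul_assoc, h2]
        _ = _ := by ring
    rw [key]
    exact Ideal.mul_mem_right _ _ hder
  have hsup : (conductor ℤ ζ).comap (algebraMap ℤ R) ⊔ I = ⊤ := by
    rw [Ideal.eq_top_iff_one]
    have hcop : IsCoprime (d : ℤ) (p : ℤ) := by
      rw [Int.isCoprime_iff_gcd_eq_one]
      simpa [Int.gcd_natCast_natCast, Nat.coprime_comm] using (hp.coprime_iff_not_dvd.mpr hpd)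
    obtain ⟨a, b, hab⟩ := hcop
    have hdc : (d : ℤ) ∈ (conductor ℤ ζ).comap (algebraMap ℤ R) := by
      rw [Ideal.mem_comap]
      exact_mod_cast hd_mem
    have hpI : (p : ℤ) ∈ I := Ideal.mem_span_singleton_self _
    rw [← hab]
    exact Submodule.add_mem _
      (Ideal.mem_sup_left (Ideal.mul_mem_left _ a hdc))
      (Ideal.mem_sup_right (Ideal.mul_mem_left _ b hpI))
  -- a maximal ideal over p
  obtain ⟨𝔭, h𝔭max, h𝔭comap⟩ :=
    Ideal.exists_ideal_over_maximal_of_isIntegral (R := ℤ) (S := R) I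
      (by rw [(RingHom.injective_iff_ker_eq_bot _).mp hinj]; exact bot_le)
  have h𝔭prime : 𝔭.IsPrime := h𝔭max.isPrime
  have hp_mem : algebraMap ℤ R p ∈ 𝔭 := by
    have : (p : ℤ) ∈ Ideal.comap (algebraMap ℤ R) 𝔭 :=
      h𝔭comap.symm ▸ Ideal.mem_span_singleton_self _
    exact this
  have h𝔭bot : 𝔭 ≠ ⊥ := by
    intro h
    apply hIbot
    rw [← h𝔭comap, h, ← RingHom.ker_eq_comap_bot, (RingHom.injective_iff_ker_eq_bot _).mp hinj]
  have h𝔭Prime : Prime 𝔭 := Ideal.prime_of_isPrime h𝔭bot h𝔭prime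
  -- the map of I
  have hmapIle : I.map (algebraMap ℤ R) ≤ 𝔭 := by
    rw [hIdef, Ideal.map_span, Set.image_singleton, Ideal.span_singleton_le_iff_mem]
    exact hp_mem
  have hmapIbot : I.map (algebraMap ℤ R) ≠ ⊥ := by
    rw [Ne, Ideal.map_eq_bot_iff_of_injective hinj]
    exact hIbot
  -- p not in 𝔭^2  (unramifiedness via Kummer-Dedekind)
  have hp_not_sq : algebraMap ℤ R p ∉ 𝔭 ^ 2 := by
    intro hmem
    have hfact : 𝔭 ∈ normalizedFactors (I.map (algebraMap ℤ R)) := by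
      rw [mem_normalizedFactors_iff hmapIbot]
      exact ⟨h𝔭Prime, Ideal.dvd_iff_le.mpr hmapIle⟩
    have hKD := KummerDedekind.emultiplicity_factors_map_eq_emultiplicity hImax hIbot hsup
      hζRint hfact
    -- squarefree target
    letI : Field (ℤ ⧸ I) := Ideal.Quotient.field I
    have hndvd : ((d : ℕ) : ℤ ⧸ I) ≠ 0 := by
      rw [← map_natCast (Ideal.Quotient.mk I), Ne, Ideal.Quotient.eq_zero_iff_mem, hIdef,
        Ideal.mem_span_singleton]
      exact_mod_cast fun h => hpd (Int.ofNat_dvd.mp h)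
    have hsqf : Squarefree ((minpoly ℤ ζ).map (Ideal.Quotient.mk I)) := by
      apply Squarefree.squarefree_of_dvd (y := ((X : (ℤ ⧸ I)[X]) ^ (n : ℕ) - 1))
      · rw [hminpoly]
        have := Polynomial.map_dvd (Ideal.Quotient.mk I) (Polynomial.cyclotomic.dvd_X_pow_sub_one
          (n : ℕ) ℤ)
        simpa using this
      · have : ((X : (ℤ ⧸ I)[X]) ^ (n : ℕ) - 1) = X ^ (n : ℕ) - C 1 := by rw [map_one]
        rw [this]
        exact (separable_X_pow_sub_C 1 (by rwa [hn]) one_ne_zero).squarefree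
    set q := (KummerDedekind.normalizedFactorsMapEquivNormalizedFactorsMinPolyMk hImax hIbot
      hsup hζRint ⟨𝔭, hfact⟩)
    have hq := q.prop
    have hle1 : emultiplicity (q : (ℤ ⧸ I)[X]) ((minpoly ℤ ζ).map (Ideal.Quotient.mk I)) ≤ 1 := by
      rcases (squarefree_iff_emultiplicity_le_one _).mp hsqf (q : (ℤ ⧸ I)[X]) with
        h | h
      · exact h
      · exact absurd h (irreducible_of_normalized_factor _ hq).not_isUnit
    have hdvd2 : 𝔭 ^ 2 ∣ I.map (algebraMap ℤ R) := by
      rw [Ideal.dvd_iff_le, hIdef, Ideal.map_span, Set.image_singleton,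
        Ideal.span_singleton_le_iff_mem]
      exact hmem
    have hge2 := pow_dvd_iff_le_emultiplicity.mp hdvd2
    rw [hKD] at hge2
    have : ((2 : ℕ) : ℕ∞) ≤ 1 := le_trans hge2 hle1
    simp at this
  -- Eisenstein
  obtain ⟨m, hm⟩ := hp1
  have hmR_not : algebraMap ℤ R m ∉ 𝔭 := by
    intro hmem
    have : m ∈ I := h𝔭comap ▸ Ideal.mem_comap.mpr hmem
    rw [hIdef, Ideal.mem_span_singleton] at this
    exact hp2 (by rw [hm, pow_two]; exact mul_dvd_mul_left _ this)
  set f₀ : R[X] := X ^ d + C (algebraMap ℤ R c) with hf₀def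
  have hf₀monic : f₀.Monic := monic_X_pow_add_C _ (by omega)
  have hdeg : f₀.natDegree = d := natDegree_X_pow_add_C
  have heis : f₀.IsEisensteinAt 𝔭 := by
    constructor
    · rw [hf₀monic.leadingCoeff]
      exact fun h => h𝔭prime.ne_top (Ideal.eq_top_of_isUnit_mem _ h isUnit_one)
    · intro k hk
      rw [hdeg] at hk
      rw [hf₀def, coeff_add, coeff_X_pow, if_neg (by omega), coeff_C, zero_add]
      split_ifs with h
      · rw [hm, map_mul]
        exact Ideal.mul_mem_right _ _ hp_mem
      · exact Ideal.zero_mem _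
    · rw [hf₀def, coeff_add, coeff_X_pow, if_neg (by omega), coeff_C, if_pos rfl, zero_add]
      intro hmem
      have hdvd : 𝔭 ^ 2 ∣ Ideal.span {algebraMap ℤ R c} := by
        rw [Ideal.dvd_iff_le, Ideal.span_singleton_le_iff_mem]
        exact hmem
      rw [hm, map_mul, ← Ideal.span_singleton_mul_span_singleton] at hdvd
      have := h𝔭Prime.pow_dvd_of_dvd_mul_right 2
        (by rw [Ideal.dvd_iff_le, Ideal.span_singleton_le_iff_mem]; exact hmR_not) hdvd
      rw [Ideal.dvd_iff_le, Ideal.span_singleton_le_iff_mem] at this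
      exact hp_not_sq this
  have hirr₀ : Irreducible f₀ := heis.irreducible h𝔭prime hf₀monic.isPrimitive (by omega)
  have hfin := (hf₀monic.irreducible_iff_irreducible_map_fraction_map (K := K)).mp hirr₀
  have hmapf : f₀.map (algebraMap R K) = X ^ d + C ((c : ℚ) : K) := by
    rw [hf₀def, Polynomial.map_add, Polynomial.map_pow, map_X, map_C,
      ← IsScalarTower.algebraMap_apply]
    rw [eq_intCast, Rat.cast_intCast]
  rwa [hmapf] at hfin

lemma aux_card (d : ℕ) (hd : 2 ≤ d) (c : ℤ) (p : ℕ) (hp : p.Prime)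
    (hpd : ¬ p ∣ d) (hp1 : (p : ℤ) ∣ c) (hp2 : ¬ (p : ℤ) ^ 2 ∣ c) (n : ℕ+) (hn : (n : ℕ) = d) :
    Fintype.card (Polynomial.Gal ((X : ℚ[X]) ^ d + C (c : ℚ))) = d.totient * d := by
  classical
  have hc0 : (c : ℚ) ≠ 0 := by
    intro h
    apply hp2
    rw [show c = 0 from by exact_mod_cast h]
    exact dvd_zero _
  set f : ℚ[X] := X ^ d + C (c : ℚ) with hfdef
  have hfmonic : f.Monic := monic_X_pow_add_C _ (by omega)
  have hfdeg : f.natDegree = d := natDegree_X_pow_add_C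
  have hfeq : f = X ^ d - C (-(c : ℚ)) := by rw [map_neg, sub_neg_eq_add]
  have hfsep : f.Separable := by
    rw [hfeq]
    exact separable_X_pow_sub_C _ (by exact_mod_cast show (d:ℚ) ≠ 0 by exact_mod_cast by omega)
      (neg_ne_zero.mpr hc0)
  rw [← Nat.card_eq_fintype_card, Polynomial.Gal.card_of_separable hfsep]
  set M := f.SplittingField with hMdef
  have hsplits : Splits (f.map (algebraMap ℚ M)) := SplittingField.splits f
  set φ := algebraMap ℚ M with hφdef
  set fM := f.map φ with hfMdef
  have hfM0 : fM ≠ 0 := (hfmonic.map _).ne_zero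
  have hfMdeg : fM.natDegree = d := by rw [hfMdef, natDegree_map, hfdeg]
  have hsplitsM : Splits fM := hsplits
  have hcard : fM.roots.card = d := by rw [splits_iff_card_roots.mp hsplitsM, hfMdeg]
  have hnodup : fM.roots.Nodup := nodup_roots (hfsep.map)
  -- a root β
  obtain ⟨β, hβ⟩ := hsplits.exists_eval_eq_zero
    (by rw [degree_map, degree_eq_natDegree hfmonic.ne_zero, hfdeg]; exact_mod_cast by omega)
  have hβd : β ^ d = -(φ (c : ℚ)) := by
    have h2 : β ^ d + φ (c : ℚ) = 0 := by
      have h3 : eval₂ φ β (X ^ d + C (c : ℚ)) = 0 := by rw [← eval_map]; exact hβ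
      rw [eval₂_add, eval₂_pow, eval₂_X, eval₂_C] at h3
      exact h3
    exact eq_neg_of_add_eq_zero_left h2
  have hβ0 : β ≠ 0 := by
    intro h
    rw [h, zero_pow (by omega), eq_comm, neg_eq_zero] at hβd
    exact hc0 ((_root_.map_eq_zero φ).mp hβd)
  -- every root r of fM satisfies r ^ d = -φ c
  have hroot_pow : ∀ r ∈ fM.roots, r ^ d = -(φ (c : ℚ)) := by
    intro r hr
    have hir := (mem_roots hfM0).mp hr
    have h2 : r ^ d + φ (c : ℚ) = 0 := by
      have h3 : eval₂ φ r (X ^ d + C (c : ℚ)) = 0 := by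
        have h4 : eval r (map φ (X ^ d + C (c : ℚ))) = 0 := hir
        rwa [eval_map] at h4
      rw [eval₂_add, eval₂_pow, eval₂_X, eval₂_C] at h3
      exact h3
    exact eq_neg_of_add_eq_zero_left h2
  -- X^d - 1 splits in M
  have hXdsplits : Splits (((X : ℚ[X]) ^ d - 1).map φ) := by
    have hne : ((X : M[X]) ^ d - C 1) ≠ 0 := X_pow_sub_C_ne_zero (by omega) 1
    set t : Finset M := fM.roots.toFinset.image (· * β⁻¹) with htdef
    have htcard : t.card = d := by
      rw [htdef, Finset.card_image_of_injective _ (mul_left_injective₀ (inv_ne_zero hβ0)),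
        Multiset.toFinset_card_of_nodup hnodup, hcard]
    have htsub : t ⊆ ((X : M[X]) ^ d - C 1).roots.toFinset := by
      intro x hx
      rw [htdef, Finset.mem_image] at hx
      obtain ⟨r, hr, rfl⟩ := hx
      rw [Multiset.mem_toFinset] at hr ⊢
      rw [mem_roots hne]
      have hφc : φ (c : ℚ) ≠ 0 := fun h => hc0 ((_root_.map_eq_zero φ).mp h)
      rw [IsRoot, eval_sub, eval_pow, eval_X, eval_C, mul_pow, hroot_pow r hr, inv_pow, hβd,
        sub_eq_zero]
      exact mul_inv_cancel₀ (neg_ne_zero.mpr hφc)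
    have hcard1 : ((X : M[X]) ^ d - C 1).roots.card = d := by
      have hle := card_roots' ((X : M[X]) ^ d - C 1)
      rw [natDegree_X_pow_sub_C] at hle
      have h1 := Finset.card_le_card htsub
      have h2 := Multiset.toFinset_card_le ((X : M[X]) ^ d - C 1).roots
      omega
    have hmapeq : ((X : ℚ[X]) ^ d - 1).map φ = (X : M[X]) ^ d - C 1 := by
      simp
    rw [hmapeq]
    rw [splits_iff_card_roots, hcard1, natDegree_X_pow_sub_C]
  have hcycsplits : Splits ((cyclotomic (n : ℕ) ℚ).map φ) := by
    refine Splits.of_dvd hXdsplits ?_ ?_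
    · refine Polynomial.map_ne_zero ?_
      intro h
      have := congrArg natDegree h
      simp [natDegree_X_pow_sub_C, show ((X : ℚ[X]) ^ d - 1) = X ^ d - C 1 by rw [map_one]] at this
      omega
    · rw [hn]; exact Polynomial.map_dvd φ (cyclotomic.dvd_X_pow_sub_one d ℚ)
  -- embed K into M
  set K := CyclotomicField n ℚ with hKdef
  haveI : IsCyclotomicExtension {(n : ℕ)} ℚ K :=
    haveI : NeZero ((n : ℕ) : ℚ) := ⟨by simp⟩
    CyclotomicField.isCyclotomicExtension _ _
  haveI : NumberField K := IsCyclotomicExtension.numberField {(n : ℕ)} ℚ K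
  let lift : K →ₐ[ℚ] M := SplittingField.lift (cyclotomic (n : ℕ) ℚ) hcycsplits
  letI : Algebra K M := lift.toRingHom.toAlgebra
  haveI : IsScalarTower ℚ K M := IsScalarTower.of_algebraMap_eq fun x => (lift.commutes x).symm
  set g : K[X] := X ^ d + C ((c : ℚ) : K) with hgdef
  have hmapfg : f.map (algebraMap ℚ K) = g := by
    rw [hfdef, hgdef, Polynomial.map_add, Polynomial.map_pow, map_X, map_C, eq_ratCast]
  have hgM : g.map (algebraMap K M) = fM := by
    rw [← hmapfg, Polynomial.map_map, ← IsScalarTower.algebraMap_eq, hfMdef, hφdef]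
  haveI hsf : IsSplittingField K M g := by
    constructor
    · rw [hgM]
      exact hsplitsM
    · have h1 : Algebra.adjoin ℚ (f.rootSet M) = ⊤ := SplittingField.adjoin_rootSet f
      have hroots_eq : g.rootSet M = f.rootSet M := by
        simp only [rootSet, aroots_def]
        rw [hgM]
      rw [hroots_eq, eq_top_iff]
      intro x _
      have hx : x ∈ Algebra.adjoin ℚ (f.rootSet M) := h1 ▸ Algebra.mem_top
      have hle : Algebra.adjoin ℚ (f.rootSet M) ≤
          (Algebra.adjoin K (f.rootSet M)).restrictScalars ℚ :=
        Algebra.adjoin_le fun y hy =>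
          (Subalgebra.mem_restrictScalars ℚ).mpr (Algebra.subset_adjoin hy)
      exact (Subalgebra.mem_restrictScalars ℚ).mp (hle hx)
  have hirr : Irreducible g := aux_irred d hd c p hp hpd hp1 hp2 n hn
  have hgeq : g = X ^ d - C (-((c : ℚ) : K)) := by rw [map_neg, sub_neg_eq_add]
  have hirr' : Irreducible ((X : K[X]) ^ d - C (-((c : ℚ) : K))) := by rwa [hgeq] at hirr
  haveI hsf' : IsSplittingField K M ((X : K[X]) ^ d - C (-((c : ℚ) : K))) := by
    rwa [← hgeq]
  have hζK := IsCyclotomicExtension.zeta_spec n ℚ K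
  have hζK' : IsPrimitiveRoot (IsCyclotomicExtension.zeta n ℚ K) d := by
    rw [← hn]; exact hζK
  have hprim : (primitiveRoots d K).Nonempty :=
    ⟨_, (mem_primitiveRoots (by omega)).mpr hζK'⟩
  have hfinKM : Module.finrank K M = d :=
    finrank_of_isSplittingField_X_pow_sub_C hprim hirr' M
  have hfinQK : Module.finrank ℚ K = d.totient := by
    rw [IsCyclotomicExtension.finrank K (cyclotomic.irreducible_rat n.pos), hn]
  haveI : FiniteDimensional K M :=
    IsSplittingField.finiteDimensional M ((X : K[X]) ^ d - C (-((c : ℚ) : K)))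
  rw [← Module.finrank_mul_finrank ℚ K M, hfinQK, hfinKM]



theorem stmt19 (d : ℕ) (hd : 2 ≤ d) (c : ℤ) (p : ℕ) (hp : p.Prime)
    (hpd : ¬ p ∣ d) (hp1 : (p : ℤ) ∣ c) (hp2 : ¬ (p : ℤ) ^ 2 ∣ c) :
    Irreducible (Polynomial.X ^ d +
      Polynomial.C (((c : ℚ) : CyclotomicField d ℚ))) ∧
    Fintype.card
        (Polynomial.Gal (Polynomial.X ^ d + Polynomial.C (c : ℚ))) =
      d.totient * d := by
  exact ⟨aux_irred d hd c p hp hpd hp1 hp2 ⟨d, by omega⟩ rfl,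
    aux_card d hd c p hp hpd hp1 hp2 ⟨d, by omega⟩ rfl⟩
end
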